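/- arXiv:1605.06599 — 9 statements merged into one kernel-verified Lean document; each statement's English description precedes it below -/
import Mathlib

section
/- Let M > 0 and let ã : ℝ³ → ℝ satisfy ‖ã‖_{W^{2,∞}(ℝ³)} ≤ M. Then for every σ > 0 the regularization a_σ is differentiable on ℝ³, and there exists a constant C > 0, depending only on M and χ, such that for every σ > 0 and every x ∈ ℝ³ one has |∇a_σ(x) − ∇ã(x)| ≤ C σ^{−1/3}. -/
/-!
Write `s = σ^{1/3}`, so that `χ_σ = s³ χ(s ·)` has integral `1`, is supported in the ball of
radius `1/s`, and `‖∇χ_σ‖₁ = s ‖∇χ‖₁`. Differentiating under the integral,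
`∇a_σ(x) = ∫ χ_σ(x - y) ∇ã(y) dy + ∫ ∇χ_σ(x - y) (ã(y) + (x - y)·∇ã(y)) dy`.
As `∫ χ_σ = 1` and `∫ ∇χ_σ = 0`, subtracting `∇ã(x)` leaves the average of
`∇ã(y) - ∇ã(x) = O(1/s)` against `χ_σ` plus the integral of the Taylor remainder
`ã(y) + (x - y)·∇ã(y) - ã(x) = O(1/s²)` against `∇χ_σ`; both are `O(1/s) = O(σ^{-1/3})`.
-/

open MeasureTheory
open scoped RealInnerProductSpace

/-- The regularization `a_σ` of a function `a : ℝ³ → ℝ`, built from the mollifier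
`χ_σ(x) = σ χ(σ^{1/3} x)`:
`a_σ(x) = ∫ χ_σ(x − y) (a(y) + (x − y)·∇a(y)) dy`. -/
noncomputable def reg (χ a : EuclideanSpace ℝ (Fin 3) → ℝ) (σ : ℝ)
    (x : EuclideanSpace ℝ (Fin 3)) : ℝ :=
  ∫ y : EuclideanSpace ℝ (Fin 3),
    (σ * χ ((σ ^ ((1:ℝ)/3)) • (x - y))) * (a y + ⟪x - y, gradient a y⟫)

open InnerProductSpace Metric Function Module
open scoped NNReal

section Tangent

variable {E : Type*} [NormedAddCommGroup E] [InnerProductSpace ℝ E] [CompleteSpace E]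
  {k a : E → ℝ} {G : E → E} {M : ℝ≥0} {r : ℝ}

theorem abs_sub_tangent_le_of_lipschitzWith_gradient
    (ha : Differentiable ℝ a) (hG : LipschitzWith M (gradient a)) (x y : E) :
    |a x - (a y + ⟪x - y, gradient a y⟫)| ≤ M * ‖x - y‖ ^ 2 := by
  have hderiv : ∀ z ∈ closedBall y ‖x - y‖,
      HasFDerivWithinAt a (toDual ℝ E (gradient a z)) (closedBall y ‖x - y‖) z :=
    fun z _ => (ha z).hasGradientAt.hasFDerivAt.hasFDerivWithinAt
  have hbound : ∀ z ∈ closedBall y ‖x - y‖,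
      ‖toDual ℝ E (gradient a z) - toDual ℝ E (gradient a y)‖ ≤ M * ‖x - y‖ := by
    intro z hz
    rw [← map_sub, LinearIsometryEquiv.norm_map, ← dist_eq_norm]
    exact (hG.dist_le_mul z y).trans (by gcongr; exact hz)
  have h := (convex_closedBall y _).norm_image_sub_le_of_norm_hasFDerivWithin_le' hderiv hbound
    (mem_closedBall_self (norm_nonneg _)) (y := x) (by simp [dist_eq_norm])
  rw [toDual_apply_apply, real_inner_comm, Real.norm_eq_abs, ← sub_add_eq_sub_sub] at h
  linarith

theorem hasFDerivAt_kernel_mul_tangent (hk : Differentiable ℝ k) (y x : E) :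
    HasFDerivAt (fun x => k (x - y) * (a y + ⟪x - y, G y⟫))
      (k (x - y) • toDual ℝ E (G y) + (a y + ⟪x - y, G y⟫) • fderiv ℝ k (x - y)) x := by
  have hk' : HasFDerivAt (fun x => k (x - y)) (fderiv ℝ k (x - y)) x :=
    (hasFDerivAt_comp_sub y).2 (hk (x - y)).hasFDerivAt
  have htangent : HasFDerivAt (fun x => a y + ⟪x - y, G y⟫) (toDual ℝ E (G y)) x := by
    simp_rw [real_inner_comm (G y), ← toDual_apply_apply]
    exact ((hasFDerivAt_comp_sub y).2 (toDual ℝ E (G y)).hasFDerivAt).const_add (a y)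
  exact hk'.mul htangent

theorem norm_kernel_smul_gradient_sub_add_le (hk_supp : tsupport k ⊆ closedBall 0 r)
    (ha : Differentiable ℝ a) (hG : LipschitzWith M (gradient a)) (x y : E) :
    ‖k (x - y) • (toDual ℝ E (gradient a y) - toDual ℝ E (gradient a x))
        + (a y + ⟪x - y, gradient a y⟫ - a x) • fderiv ℝ k (x - y)‖
      ≤ M * r * ‖k (x - y)‖ + M * r ^ 2 * ‖fderiv ℝ k (x - y)‖ := by
  refine (norm_add_le _ _).trans (add_le_add ?_ ?_)
  · rw [norm_smul, ← map_sub, LinearIsometryEquiv.norm_map, mul_comm]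
    rcases eq_or_ne (k (x - y)) 0 with h | h
    · simp [h]
    have hxy : ‖x - y‖ ≤ r := by simpa using hk_supp (subset_tsupport k h)
    gcongr
    calc ‖gradient a y - gradient a x‖ ≤ M * ‖x - y‖ := by
          rw [← dist_eq_norm, ← dist_eq_norm, dist_comm]; exact hG.dist_le_mul x y
      _ ≤ M * r := by gcongr
  · rw [norm_smul, Real.norm_eq_abs, abs_sub_comm]
    rcases eq_or_ne (fderiv ℝ k (x - y)) 0 with h | h
    · simp [h]
    have hxy : ‖x - y‖ ≤ r := by simpa using hk_supp (support_fderiv_subset ℝ h)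
    gcongr
    calc |a x - (a y + ⟪x - y, gradient a y⟫)| ≤ M * ‖x - y‖ ^ 2 :=
          abs_sub_tangent_le_of_lipschitzWith_gradient ha hG x y
      _ ≤ M * r ^ 2 := by gcongr

end Tangent

theorem integral_fderiv_eq_zero_of_hasCompactSupport {E : Type*} [NormedAddCommGroup E]
    [NormedSpace ℝ E] [FiniteDimensional ℝ E] [MeasurableSpace E] [BorelSpace E]
    {μ : Measure E} [μ.IsAddHaarMeasure] {k : E → ℝ}
    (hk : ContDiff ℝ 1 k) (hk_supp : HasCompactSupport k) :
    ∫ z, fderiv ℝ k z ∂μ = 0 := by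
  have hDk : Integrable (fderiv ℝ k) μ :=
    (hk.continuous_fderiv one_ne_zero).integrable_of_hasCompactSupport
      (hk_supp.fderiv (𝕜 := ℝ))
  ext v
  rw [ContinuousLinearMap.integral_apply hDk]
  have h := integral_mul_fderiv_eq_neg_fderiv_mul_of_integrable (μ := μ) (v := v)
    (f := fun _ => (1 : ℝ)) (g := k) (by simp)
    (by simpa using hDk.apply_continuousLinearMap v)
    (by simpa using hk.continuous.integrable_of_hasCompactSupport hk_supp)
    (fun _ _ => differentiableAt_const _) (fun x _ => hk.differentiable one_ne_zero x)
  simpa using h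

section Rescale

variable {E : Type*} [NormedAddCommGroup E] [NormedSpace ℝ E]

noncomputable def rescaledKernel (s : ℝ) (χ : E → ℝ) : E → ℝ :=
  fun z => s ^ finrank ℝ E * χ (s • z)

variable {χ : E → ℝ} {s r : ℝ}

theorem contDiff_rescaledKernel {n : WithTop ℕ∞} (hχ : ContDiff ℝ n χ) :
    ContDiff ℝ n (rescaledKernel s χ) :=
  contDiff_const.mul (hχ.comp (contDiff_const_smul s))

theorem fderiv_rescaledKernel (hχ : Differentiable ℝ χ) (z : E) :
    fderiv ℝ (rescaledKernel s χ) z = (s ^ finrank ℝ E * s) • fderiv ℝ χ (s • z) := by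
  unfold rescaledKernel
  rw [fderiv_const_mul (by fun_prop : DifferentiableAt ℝ (fun z => χ (s • z)) z),
    fderiv_comp_smul, smul_smul]

theorem tsupport_rescaledKernel_subset (hs : 0 < s) (hχ : tsupport χ ⊆ closedBall 0 r) :
    tsupport (rescaledKernel s χ) ⊆ closedBall 0 (r / s) := by
  refine closure_minimal (fun z hz => ?_) isClosed_closedBall
  have h := hχ (subset_tsupport χ (right_ne_zero_of_mul hz))
  rw [mem_closedBall_zero_iff, norm_smul, Real.norm_of_nonneg hs.le] at h
  rw [mem_closedBall_zero_iff, le_div_iff₀ hs]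
  linarith

theorem HasCompactSupport.rescaledKernel (hχ : HasCompactSupport χ) (hs : s ≠ 0) :
    HasCompactSupport (rescaledKernel s χ) :=
  (hχ.comp_smul hs).mul_left

variable [FiniteDimensional ℝ E] [MeasurableSpace E] [BorelSpace E] {μ : Measure E}
  [μ.IsAddHaarMeasure]

theorem integral_rescaledKernel (hs : 0 < s) : ∫ z, rescaledKernel s χ z ∂μ = ∫ z, χ z ∂μ := by
  unfold rescaledKernel
  rw [integral_const_mul, Measure.integral_comp_smul_of_nonneg μ χ s (hR := hs.le), smul_eq_mul,
    mul_inv_cancel_left₀ (by positivity)]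

theorem integral_norm_rescaledKernel (hs : 0 < s) :
    ∫ z, ‖rescaledKernel s χ z‖ ∂μ = ∫ z, ‖χ z‖ ∂μ := by
  simp only [rescaledKernel, norm_mul, norm_pow, Real.norm_of_nonneg hs.le]
  rw [integral_const_mul, Measure.integral_comp_smul_of_nonneg μ (‖χ ·‖) s (hR := hs.le),
    smul_eq_mul, mul_inv_cancel_left₀ (by positivity)]

theorem integral_norm_fderiv_rescaledKernel (hχ : Differentiable ℝ χ) (hs : 0 < s) :
    ∫ z, ‖fderiv ℝ (rescaledKernel s χ) z‖ ∂μ = s * ∫ z, ‖fderiv ℝ χ z‖ ∂μ := by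
  simp only [fderiv_rescaledKernel hχ, norm_smul, norm_mul, norm_pow, Real.norm_of_nonneg hs.le]
  rw [integral_const_mul,
    Measure.integral_comp_smul_of_nonneg μ (‖fderiv ℝ χ ·‖) s (hR := hs.le), smul_eq_mul,
    mul_right_comm, mul_inv_cancel_left₀ (by positivity), mul_comm]

end Rescale

section TangentConvolution

variable {E : Type*} [NormedAddCommGroup E] [InnerProductSpace ℝ E] [FiniteDimensional ℝ E]
  [MeasurableSpace E] [BorelSpace E] (μ : Measure E) [μ.IsAddHaarMeasure]

noncomputable def tangentConvolution (k a : E → ℝ) (G : E → E) (x : E) : ℝ :=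
  ∫ y, k (x - y) * (a y + ⟪x - y, G y⟫) ∂μ

noncomputable def tangentConvolutionFDeriv (k a : E → ℝ) (G : E → E) (x : E) : E →L[ℝ] ℝ :=
  ∫ y, k (x - y) • toDual ℝ E (G y) + (a y + ⟪x - y, G y⟫) • fderiv ℝ k (x - y) ∂μ

variable {μ} {k a χ : E → ℝ} {G : E → E} {M : ℝ≥0} {r s : ℝ}

theorem hasFDerivAt_tangentConvolution (hk : ContDiff ℝ 1 k) (hk_supp : HasCompactSupport k)
    (ha : Continuous a) (hG : Continuous G) (x₀ : E) :
    HasFDerivAt (tangentConvolution μ k a G) (tangentConvolutionFDeriv μ k a G x₀) x₀ := by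
  set F' : E → E → E →L[ℝ] ℝ := fun x y =>
    k (x - y) • toDual ℝ E (G y) + (a y + ⟪x - y, G y⟫) • fderiv ℝ k (x - y)
  have hDk : Continuous (fderiv ℝ k) := hk.continuous_fderiv one_ne_zero
  have hF'_cont : Continuous fun p : E × E => F' p.1 p.2 := by
    have := hk.continuous
    fun_prop
  obtain ⟨R, hR⟩ : ∃ R, tsupport k ⊆ closedBall 0 R :=
    hk_supp.isCompact.isBounded.subset_closedBall 0
  have hF'_zero : ∀ x y, R < ‖x - y‖ → F' x y = 0 := by
    intro x y hxy
    have hout : x - y ∉ tsupport k := fun h => by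
      simpa using (mem_closedBall_zero_iff.1 (hR h)).trans_lt hxy
    simp [F', image_eq_zero_of_notMem_tsupport hout,
      image_eq_zero_of_notMem_tsupport (fun h => hout (tsupport_fderiv_subset ℝ h))]
  -- For `x` near `x₀`, `F' x y` vanishes unless `y` lies in a fixed compact ball.
  obtain ⟨C, hC⟩ := (isCompact_closedBall x₀ 1 |>.prod (isCompact_closedBall x₀ (R + 1)))
    |>.exists_bound_of_continuousOn hF'_cont.continuousOn
  have hF_int : Integrable (fun y => k (x₀ - y) * (a y + ⟪x₀ - y, G y⟫)) μ :=
    Continuous.integrable_of_hasCompactSupport (by fun_prop)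
      (hk_supp.comp_homeomorph (Homeomorph.subLeft x₀)).mul_right
  refine hasFDerivAt_integral_of_dominated_of_fderiv_le
    (bound := (closedBall x₀ (R + 1)).indicator fun _ => C) (ball_mem_nhds x₀ one_pos)
    (.of_forall fun x => by fun_prop) hF_int (by fun_prop) (.of_forall fun y x hx => ?_)
    ((integrable_indicator_iff measurableSet_closedBall).2
      (integrableOn_const measure_closedBall_lt_top.ne))
    (.of_forall fun y x _ => hasFDerivAt_kernel_mul_tangent (hk.differentiable one_ne_zero) y x)
  change ‖F' x y‖ ≤ _
  by_cases hy : y ∈ closedBall x₀ (R + 1)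
  · rw [Set.indicator_of_mem hy]
    exact hC (x, y) ⟨ball_subset_closedBall hx, hy⟩
  · rw [Set.indicator_of_notMem hy, hF'_zero x y, norm_zero]
    rw [mem_closedBall, not_le] at hy
    rw [mem_ball] at hx
    rw [← dist_eq_norm, dist_comm]
    linarith [dist_triangle y x x₀]

theorem tangentConvolutionFDeriv_sub_eq_integral (hk : ContDiff ℝ 1 k)
    (hk_supp : HasCompactSupport k) (hk_int : ∫ z, k z ∂μ = 1) (ha : Continuous a)
    (hG : Continuous G) (x : E) :
    tangentConvolutionFDeriv μ k a G x - toDual ℝ E (G x)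
      = ∫ y, k (x - y) • (toDual ℝ E (G y) - toDual ℝ E (G x))
          + (a y + ⟪x - y, G y⟫ - a x) • fderiv ℝ k (x - y) ∂μ := by
  have hk_x : Integrable (fun y => k (x - y)) μ :=
    (hk.continuous.integrable_of_hasCompactSupport hk_supp).comp_sub_left x
  have hDk : Continuous (fderiv ℝ k) := hk.continuous_fderiv one_ne_zero
  have hDk_x : Integrable (fun y => fderiv ℝ k (x - y)) μ :=
    (hDk.integrable_of_hasCompactSupport (hk_supp.fderiv (𝕜 := ℝ))).comp_sub_left x
  have hDk_x' : Integrable (fun y => a x • fderiv ℝ k (x - y)) μ := hDk_x.smul (a x)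
  have hF' : Integrable (fun y => k (x - y) • toDual ℝ E (G y)
      + (a y + ⟪x - y, G y⟫) • fderiv ℝ k (x - y)) μ := by
    refine .add (Continuous.integrable_of_hasCompactSupport ?_
        (hk_supp.comp_homeomorph (Homeomorph.subLeft x)).smul_right)
      (Continuous.integrable_of_hasCompactSupport ?_
        (((hk_supp.fderiv (𝕜 := ℝ)).comp_homeomorph (Homeomorph.subLeft x)).smul_left
          (f := fun y => a y + ⟪x - y, G y⟫)))
    · exact (hk.continuous.comp (continuous_sub_left x)).smul ((toDual ℝ E).continuous.comp hG)
    · exact (ha.add ((continuous_sub_left x).inner hG)).smul (hDk.comp (continuous_sub_left x))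
  have hmean_int : Integrable (fun y => k (x - y) • toDual ℝ E (G x)
      + a x • fderiv ℝ k (x - y)) μ := (hk_x.smul_const (toDual ℝ E (G x))).add hDk_x'
  have hmean : ∫ y, k (x - y) • toDual ℝ E (G x) + a x • fderiv ℝ k (x - y) ∂μ
      = toDual ℝ E (G x) := by
    rw [integral_add (hk_x.smul_const _) hDk_x', integral_smul_const, integral_smul,
      integral_sub_left_eq_self k, integral_sub_left_eq_self (fderiv ℝ k), hk_int,
      integral_fderiv_eq_zero_of_hasCompactSupport hk hk_supp, one_smul, smul_zero, add_zero]
  conv_lhs => rw [← hmean, tangentConvolutionFDeriv, ← integral_sub hF' hmean_int]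
  congr 1
  funext y
  module

theorem norm_gradient_tangentConvolution_sub_le (hk : ContDiff ℝ 1 k)
    (hk_supp : tsupport k ⊆ closedBall 0 r) (hk_int : ∫ z, k z ∂μ = 1)
    (ha : Differentiable ℝ a) (hG : LipschitzWith M (gradient a)) (x : E) :
    ‖gradient (tangentConvolution μ k a (gradient a)) x - gradient a x‖
      ≤ M * r * ∫ z, ‖k z‖ ∂μ + M * r ^ 2 * ∫ z, ‖fderiv ℝ k z‖ ∂μ := by
  have hk_cs : HasCompactSupport k :=
    (isCompact_closedBall 0 r).of_isClosed_subset (isClosed_tsupport k) hk_supp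
  have hk_x : Integrable (fun y => ‖k (x - y)‖) μ :=
    (hk.continuous.integrable_of_hasCompactSupport hk_cs).norm.comp_sub_left x
  have hDk_x : Integrable (fun y => ‖fderiv ℝ k (x - y)‖) μ :=
    ((hk.continuous_fderiv one_ne_zero).integrable_of_hasCompactSupport
      (hk_cs.fderiv (𝕜 := ℝ))).norm.comp_sub_left x
  have hderiv := hasFDerivAt_tangentConvolution (μ := μ) hk hk_cs ha.continuous hG.continuous x
  rw [hderiv.hasGradientAt.gradient, ← (toDual ℝ E).norm_map, map_sub,
    LinearIsometryEquiv.apply_symm_apply,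
    tangentConvolutionFDeriv_sub_eq_integral hk hk_cs hk_int ha.continuous hG.continuous]
  calc _ ≤ ∫ y, M * r * ‖k (x - y)‖ + M * r ^ 2 * ‖fderiv ℝ k (x - y)‖ ∂μ :=
        norm_integral_le_of_norm_le ((hk_x.const_mul _).add (hDk_x.const_mul _))
          (.of_forall (norm_kernel_smul_gradient_sub_add_le hk_supp ha hG x))
    _ = M * r * ∫ z, ‖k z‖ ∂μ + M * r ^ 2 * ∫ z, ‖fderiv ℝ k z‖ ∂μ := by
        rw [integral_add (hk_x.const_mul _) (hDk_x.const_mul _), integral_const_mul,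
          integral_const_mul, integral_sub_left_eq_self (‖k ·‖),
          integral_sub_left_eq_self (‖fderiv ℝ k ·‖)]

theorem norm_gradient_tangentConvolution_rescaledKernel_sub_le (hχ : ContDiff ℝ 1 χ)
    (hχ_supp : tsupport χ ⊆ closedBall 0 r) (hχ_int : ∫ z, χ z ∂μ = 1)
    (ha : Differentiable ℝ a) (hG : LipschitzWith M (gradient a)) (hs : 0 < s) (x : E) :
    ‖gradient (tangentConvolution μ (rescaledKernel s χ) a (gradient a)) x - gradient a x‖
      ≤ M / s * (r * ∫ z, ‖χ z‖ ∂μ + r ^ 2 * ∫ z, ‖fderiv ℝ χ z‖ ∂μ) := by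
  have h := norm_gradient_tangentConvolution_sub_le (contDiff_rescaledKernel hχ)
    (tsupport_rescaledKernel_subset hs hχ_supp)
    (by rw [integral_rescaledKernel (μ := μ) hs, hχ_int]) ha hG x
  rw [integral_norm_rescaledKernel hs,
    integral_norm_fderiv_rescaledKernel (hχ.differentiable one_ne_zero) hs] at h
  convert h using 1
  field_simp

end TangentConvolution

theorem reg_eq_tangentConvolution (χ a : EuclideanSpace ℝ (Fin 3) → ℝ) {σ : ℝ} (hσ : 0 < σ) :
    reg χ a σ
      = tangentConvolution volume (rescaledKernel (σ ^ (1 / 3 : ℝ)) χ) a (gradient a) := by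
  funext x
  simp only [reg, tangentConvolution, rescaledKernel, finrank_euclideanSpace_fin,
    ← Real.rpow_natCast, ← Real.rpow_mul hσ.le]
  norm_num

theorem stmt1_general
    (χ : EuclideanSpace ℝ (Fin 3) → ℝ)
    (hχ_smooth : ContDiff ℝ (⊤ : ℕ∞) χ)
    (hχ_supp : ∀ x, 1 < ‖x‖ → χ x = 0)
    (hχ_int : ∫ x, χ x = 1)
    (M : ℝ) (hM : 0 < M)
    (a : EuclideanSpace ℝ (Fin 3) → ℝ)
    (ha_diff : ∀ x, DifferentiableAt ℝ a x)
    (hgrad_lip : LipschitzWith M.toNNReal (gradient a)) :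
    (∀ σ > 0, ∀ x : EuclideanSpace ℝ (Fin 3), DifferentiableAt ℝ (reg χ a σ) x) ∧
    ∃ C > 0, ∀ σ > 0, ∀ x : EuclideanSpace ℝ (Fin 3),
      ‖gradient (reg χ a σ) x - gradient a x‖ ≤ C * σ ^ (-(1:ℝ)/3) := by
  have ha : Differentiable ℝ a := ha_diff
  have hχ : ContDiff ℝ 1 χ := hχ_smooth.of_le (by exact_mod_cast le_top)
  have hχ_ball : tsupport χ ⊆ closedBall 0 1 := closure_minimal
    (fun x hx => mem_closedBall_zero_iff.2 (not_lt.1 (mt (hχ_supp x) hx))) isClosed_closedBall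
  have hχ_cs : HasCompactSupport χ :=
    (isCompact_closedBall 0 1).of_isClosed_subset (isClosed_tsupport χ) hχ_ball
  have hχ_norm : 1 ≤ ∫ z, ‖χ z‖ :=
    hχ_int ▸ (le_abs_self _).trans (norm_integral_le_integral_norm χ)
  refine ⟨fun σ hσ x => ?_, M * ((∫ z, ‖χ z‖) + ∫ z, ‖fderiv ℝ χ z‖), ?_, fun σ hσ x => ?_⟩
  · rw [reg_eq_tangentConvolution χ a hσ]
    exact (hasFDerivAt_tangentConvolution (contDiff_rescaledKernel hχ)
      (hχ_cs.rescaledKernel (by positivity)) ha.continuous hgrad_lip.continuous x).differentiableAt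
  · have : 0 ≤ ∫ z, ‖fderiv ℝ χ z‖ := integral_nonneg fun z => norm_nonneg _
    positivity
  · rw [reg_eq_tangentConvolution χ a hσ]
    calc _ ≤ M.toNNReal / σ ^ (1 / 3 : ℝ)
          * (1 * (∫ z, ‖χ z‖) + 1 ^ 2 * ∫ z, ‖fderiv ℝ χ z‖) :=
          norm_gradient_tangentConvolution_rescaledKernel_sub_le hχ hχ_ball hχ_int ha
            hgrad_lip (by positivity) x
      _ = _ := by rw [Real.coe_toNNReal _ hM.le, neg_div, Real.rpow_neg hσ.le]; ring

theorem stmt1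
    (χ : EuclideanSpace ℝ (Fin 3) → ℝ)
    (hχ_smooth : ContDiff ℝ (⊤ : ℕ∞) χ)
    (hχ_nonneg : ∀ x, 0 ≤ χ x)
    (hχ_supp : ∀ x, 1 < ‖x‖ → χ x = 0)
    (hχ_int : ∫ x, χ x = 1)
    (M : ℝ) (hM : 0 < M)
    (a : EuclideanSpace ℝ (Fin 3) → ℝ)
    (ha_diff : ∀ x, DifferentiableAt ℝ a x)
    (ha_bd : ∀ x, |a x| ≤ M)
    (hgrad_bd : ∀ x, ‖gradient a x‖ ≤ M)
    (hgrad_lip : LipschitzWith M.toNNReal (gradient a)) :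
    (∀ σ > 0, ∀ x : EuclideanSpace ℝ (Fin 3), DifferentiableAt ℝ (reg χ a σ) x) ∧
    ∃ C > 0, ∀ σ > 0, ∀ x : EuclideanSpace ℝ (Fin 3),
      ‖gradient (reg χ a σ) x - gradient a x‖ ≤ C * σ ^ (-(1:ℝ)/3) :=
  stmt1_general χ hχ_smooth hχ_supp hχ_int M hM a ha_diff hgrad_lip
end

section
/- Let M > 0 and let ã : ℝ³ → ℝ satisfy ‖ã‖_{W^{2,∞}(ℝ³)} ≤ M. Then for every σ > 0 the regularization a_σ is infinitely differentiable on ℝ³, and for every integer k ≥ 2 there exists a constant C > 0, depending only on M, χ and k, such that for every σ > 0 and every x ∈ ℝ³ the k-th iterated derivative of a_σ satisfies ‖D^k a_σ(x)‖ ≤ C σ^{(k−2)/3}. -/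
open MeasureTheory
open scoped RealInnerProductSpace

/-!
Fix `σ > 0`, put `u = σ^{1/3}` (so `σ = u³` and `χ_σ = σ χ(u ·)` is supported in the ball of
radius `1/u`), and fix the point `p` at which the derivatives are estimated. Since `∫ χ_σ = 1`,
subtracting the first-order Taylor polynomial of `a` at `p` writes `a_σ` as
`R_p ⋆ χ_σ + (∇a - ∇a(p)) ⋆ (χ_σ(z) z)` plus an affine function, where `R_p` is the Taylor
remainder. The affine part has no derivatives of order `k ≥ 2`, and all derivatives of the two
convolutions fall on the kernels: `‖D^k χ_σ‖ ≲ σ u^k` and `‖D^k (χ_σ(z) z)‖ ≲ σ u^(k-1)` on the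
ball. On the ball of radius `1/u` around `p` the Lipschitz bound on `∇a` gives `|R_p| ≤ M u⁻²` and
`‖∇a - ∇a(p)‖ ≤ M u⁻¹`, and the ball has volume `≈ u⁻³`. Both terms are therefore
`≲ M u^(k-2) = M σ^((k-2)/3)`.
-/

open Set Metric
open scoped Convolution NNReal ContDiff

universe u

section Convolution

variable {G : Type u} [NormedAddCommGroup G] [NormedSpace ℝ G] [FiniteDimensional ℝ G]
  [MeasurableSpace G] [BorelSpace G] {μ : Measure G} [μ.IsAddHaarMeasure]
  {E : Type*} [NormedAddCommGroup E] [NormedSpace ℝ E] {f : G → E}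

theorem norm_convolution_le {E' F : Type*} [NormedAddCommGroup E'] [NormedSpace ℝ E']
    [NormedAddCommGroup F] [NormedSpace ℝ F] (L : E →L[ℝ] E' →L[ℝ] F) {g : G → E'}
    {r A B : ℝ} (hg_supp : tsupport g ⊆ closedBall 0 r) (x : G)
    (hfA : ∀ y ∈ closedBall x r, ‖f y‖ ≤ A) (hgB : ∀ z ∈ closedBall (0 : G) r, ‖g z‖ ≤ B) :
    ‖(f ⋆[L, μ] g) x‖ ≤ ‖L‖ * A * B * μ.real (closedBall x r) := by
  have hmem : ∀ y, x - y ∈ closedBall (0 : G) r ↔ y ∈ closedBall x r := fun y => by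
    rw [mem_closedBall_zero_iff, mem_closedBall, dist_eq_norm, norm_sub_rev]
  have hbound : ∀ y, ‖L (f y) (g (x - y))‖ ≤
      (closedBall x r).indicator (fun _ => ‖L‖ * A * B) y := by
    intro y
    by_cases hy : y ∈ closedBall x r
    · rw [indicator_of_mem hy]
      have hA : 0 ≤ A := (norm_nonneg _).trans (hfA y hy)
      refine (L.le_opNorm₂ _ _).trans ?_
      gcongr
      exacts [hfA y hy, hgB _ ((hmem y).2 hy)]
    · rw [indicator_of_notMem hy,
        image_eq_zero_of_notMem_tsupport fun h => hy ((hmem y).1 (hg_supp h)), map_zero, norm_zero]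
  calc ‖(f ⋆[L, μ] g) x‖ ≤ ∫ y, (closedBall x r).indicator (fun _ => ‖L‖ * A * B) y ∂μ :=
        norm_integral_le_of_norm_le ((integrableOn_const measure_closedBall_lt_top.ne
          ).integrable_indicator measurableSet_closedBall) (Filter.Eventually.of_forall hbound)
    _ = ‖L‖ * A * B * μ.real (closedBall x r) := by
        rw [integral_indicator_const _ measurableSet_closedBall, smul_eq_mul, mul_comm]

/-- `E'` and `F` share the universe of `G` because the induction replaces them by `G →L[ℝ] E'`
and `G →L[ℝ] F`. -/
theorem norm_iteratedFDeriv_convolution_le {E' F : Type u} [NormedAddCommGroup E']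
    [NormedSpace ℝ E'] [NormedAddCommGroup F] [NormedSpace ℝ F] (hf : LocallyIntegrable f μ)
    (L : E →L[ℝ] E' →L[ℝ] F) (k : ℕ) {g : G → E'} (hg : ContDiff ℝ k g) {r A B : ℝ} (hr : 0 ≤ r)
    (hg_supp : tsupport g ⊆ closedBall 0 r) (x : G) (hfA : ∀ y ∈ closedBall x r, ‖f y‖ ≤ A)
    (hgB : ∀ z ∈ closedBall (0 : G) r, ‖iteratedFDeriv ℝ k g z‖ ≤ B) :
    ‖iteratedFDeriv ℝ k (f ⋆[L, μ] g) x‖ ≤ ‖L‖ * A * B * μ.real (closedBall x r) := by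
  induction k generalizing E' F g with
  | zero =>
    rw [norm_iteratedFDeriv_zero]
    exact norm_convolution_le L hg_supp x hfA fun z hz => by simpa using hgB z hz
  | succ k ih =>
    have hA : 0 ≤ A := (norm_nonneg _).trans (hfA x (mem_closedBall_self hr))
    have hB : 0 ≤ B := (norm_nonneg _).trans (hgB 0 (mem_closedBall_self hr))
    have hcg : HasCompactSupport g :=
      .of_support_subset_isCompact (isCompact_closedBall 0 r) ((subset_tsupport g).trans hg_supp)
    have hderiv : fderiv ℝ (f ⋆[L, μ] g) = f ⋆[L.precompR G, μ] fderiv ℝ g := funext fun y =>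
      (hcg.hasFDerivAt_convolution_right L hf (hg.of_le (by norm_cast; omega)) y).fderiv
    rw [← norm_iteratedFDeriv_fderiv, hderiv]
    refine (ih (L.precompR G) (hg.fderiv_right le_rfl) ((tsupport_fderiv_subset ℝ).trans hg_supp)
      fun z hz => norm_iteratedFDeriv_fderiv.trans_le (hgB z hz)).trans ?_
    gcongr
    exact L.norm_precompR_le G

end Convolution

section Kernel

variable {E : Type*} [NormedAddCommGroup E] [NormedSpace ℝ E]

theorem iteratedFDeriv_eq_zero_of_hasFDerivAt {F : Type*} [NormedAddCommGroup F]
    [NormedSpace ℝ F] {f : E → F} {L : E →L[ℝ] F} (hf : ∀ x, HasFDerivAt f L x) {k : ℕ}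
    (hk : 2 ≤ k) (x : E) : iteratedFDeriv ℝ k f x = 0 := by
  obtain ⟨j, rfl⟩ : ∃ j, k = j + 1 + 1 := ⟨k - 2, by omega⟩
  rw [iteratedFDeriv_succ_eq_comp_right, funext fun y => (hf y).fderiv, iteratedFDeriv_succ_const]
  exact LinearIsometryEquiv.map_zero _

theorem exists_pos_bound_iteratedFDeriv_of_hasCompactSupport {F : Type*} [NormedAddCommGroup F]
    [NormedSpace ℝ F] {f : E → F} (hf : ContDiff ℝ ∞ f) (hcs : HasCompactSupport f) (N : ℕ) :
    ∃ C > 0, ∀ i ≤ N, ∀ z, ‖iteratedFDeriv ℝ i f z‖ ≤ C := by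
  choose C hC using fun i => (hf.continuous_iteratedFDeriv (WithTop.coe_le_coe.2 le_top)
    ).bounded_above_of_compact_support (hcs.iteratedFDeriv i)
  have hC₀ : ∀ i, 0 ≤ C i := fun i => (norm_nonneg _).trans (hC i 0)
  refine ⟨1 + ∑ i ∈ Finset.range (N + 1), C i,
    add_pos_of_pos_of_nonneg one_pos (Finset.sum_nonneg fun i _ => hC₀ i), fun i hi z => ?_⟩
  calc ‖iteratedFDeriv ℝ i f z‖ ≤ C i := hC i z
    _ ≤ ∑ j ∈ Finset.range (N + 1), C j :=
      Finset.single_le_sum (fun j _ => hC₀ j) (Finset.mem_range.2 (by omega))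
    _ ≤ 1 + ∑ j ∈ Finset.range (N + 1), C j := le_add_of_nonneg_left zero_le_one

theorem norm_iteratedFDeriv_smul_id_le {φ : E → ℝ} {n : ℕ} (hφ : ContDiff ℝ (n + 1) φ)
    (z : E) :
    ‖iteratedFDeriv ℝ (n + 1) (fun z => φ z • z) z‖ ≤
      ‖iteratedFDeriv ℝ (n + 1) φ z‖ * ‖z‖ + (n + 1) * ‖iteratedFDeriv ℝ n φ z‖ := by
  refine (norm_iteratedFDeriv_smul_le hφ contDiff_id z le_rfl).trans ?_
  have hid : ∀ j, 2 ≤ j → iteratedFDeriv ℝ j (id : E → E) z = 0 := fun j hj =>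
    iteratedFDeriv_eq_zero_of_hasFDerivAt hasFDerivAt_id hj z
  have hid₁ : ‖iteratedFDeriv ℝ 1 (id : E → E) z‖ ≤ 1 := by
    rw [norm_iteratedFDeriv_one, fderiv_id]
    exact ContinuousLinearMap.norm_id_le
  simp only [Finset.sum_range_succ]
  rw [Finset.sum_eq_zero fun i hi => by
    rw [hid _ (by rw [Finset.mem_range] at hi; omega), norm_zero, mul_zero]]
  rw [Nat.add_sub_cancel_left, Nat.sub_self, norm_iteratedFDeriv_zero, Nat.choose_succ_self_right,
    Nat.choose_self, zero_add, Nat.cast_one, one_mul, id]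
  push_cast
  have hn : (0 : ℝ) ≤ (n + 1) * ‖iteratedFDeriv ℝ n φ z‖ := by positivity
  linarith [mul_le_of_le_one_right hn hid₁]

/-- The mollifier `χ_σ` of `reg` is `rescale χ σ (σ ^ (1 / 3))`. -/
noncomputable def rescale (χ : E → ℝ) (s c : ℝ) (z : E) : ℝ := s * χ (c • z)

variable {χ : E → ℝ} {s c : ℝ}

theorem contDiff_rescale {n : WithTop ℕ∞} (hχ : ContDiff ℝ n χ) (s c : ℝ) :
    ContDiff ℝ n (rescale χ s c) :=
  contDiff_const.mul (hχ.comp (contDiff_const_smul c))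

theorem tsupport_rescale_subset (hχ : ∀ x, 1 < ‖x‖ → χ x = 0) (hc : 0 < c) :
    tsupport (rescale χ s c) ⊆ closedBall 0 c⁻¹ := by
  refine closure_minimal (fun z hz => ?_) isClosed_closedBall
  rw [mem_closedBall_zero_iff]
  by_contra h
  refine hz ?_
  rw [rescale, hχ _ ?_, mul_zero]
  rw [norm_smul, Real.norm_of_nonneg hc.le]
  exact (inv_lt_iff_one_lt_mul₀' hc).mp (not_le.mp h)

theorem tsupport_rescale_smul_subset (hχ : ∀ x, 1 < ‖x‖ → χ x = 0) (hc : 0 < c) :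
    tsupport (fun z => rescale χ s c z • z) ⊆ closedBall 0 c⁻¹ :=
  (tsupport_smul_subset_left _ _).trans (tsupport_rescale_subset hχ hc)

theorem hasCompactSupport_rescale [ProperSpace E] (hχ : ∀ x, 1 < ‖x‖ → χ x = 0) (hc : 0 < c) :
    HasCompactSupport (rescale χ s c) :=
  .of_support_subset_isCompact (isCompact_closedBall 0 c⁻¹)
    ((subset_tsupport _).trans (tsupport_rescale_subset hχ hc))

theorem hasCompactSupport_rescale_smul [ProperSpace E] (hχ : ∀ x, 1 < ‖x‖ → χ x = 0)
    (hc : 0 < c) : HasCompactSupport (fun z => rescale χ s c z • z) :=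
  .of_support_subset_isCompact (isCompact_closedBall 0 c⁻¹)
    ((subset_tsupport _).trans (tsupport_rescale_smul_subset hχ hc))

theorem norm_iteratedFDeriv_rescale_le {n : ℕ} (hχ : ContDiff ℝ n χ) (hs : 0 ≤ s) (hc : 0 ≤ c)
    {C : ℝ} (hC : ∀ z, ‖iteratedFDeriv ℝ n χ z‖ ≤ C) (z : E) :
    ‖iteratedFDeriv ℝ n (rescale χ s c) z‖ ≤ s * c ^ n * C := by
  have hχc : ContDiff ℝ n fun z => χ (c • z) := hχ.comp (contDiff_const_smul c)
  change ‖iteratedFDeriv ℝ n (fun z => s • χ (c • z)) z‖ ≤ _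
  rw [iteratedFDeriv_const_smul_apply' hχc.contDiffAt, iteratedFDeriv_comp_const_smul c hχ,
    norm_smul, norm_smul, norm_pow, Real.norm_of_nonneg hs, Real.norm_of_nonneg hc, ← mul_assoc]
  gcongr
  exact hC _

theorem norm_iteratedFDeriv_rescale_smul_le {n : ℕ} (hχ : ContDiff ℝ (n + 1) χ) (hs : 0 ≤ s)
    (hc : 0 < c) {C : ℝ} (hC₁ : ∀ z, ‖iteratedFDeriv ℝ (n + 1) χ z‖ ≤ C)
    (hC₀ : ∀ z, ‖iteratedFDeriv ℝ n χ z‖ ≤ C) {z : E} (hz : ‖z‖ ≤ c⁻¹) :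
    ‖iteratedFDeriv ℝ (n + 1) (fun z => rescale χ s c z • z) z‖ ≤ (n + 2) * s * c ^ n * C := by
  have hC : 0 ≤ C := (norm_nonneg _).trans (hC₀ 0)
  calc _ ≤ ‖iteratedFDeriv ℝ (n + 1) (rescale χ s c) z‖ * ‖z‖ +
        (n + 1) * ‖iteratedFDeriv ℝ n (rescale χ s c) z‖ :=
        norm_iteratedFDeriv_smul_id_le (contDiff_rescale hχ s c) z
    _ ≤ s * c ^ (n + 1) * C * c⁻¹ + (n + 1) * (s * c ^ n * C) := by
        gcongr
        · exact norm_iteratedFDeriv_rescale_le hχ hs hc.le hC₁ z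
        · exact norm_iteratedFDeriv_rescale_le (hχ.of_le (by norm_cast; omega)) hs hc.le hC₀ z
    _ = (n + 2) * s * c ^ n * C := by
        field_simp
        ring

variable [MeasurableSpace E] [BorelSpace E] [ProperSpace E] {μ : Measure E} {F G : Type*}
  [NormedAddCommGroup F] [NormedSpace ℝ F]
  [NormedAddCommGroup G] [NormedSpace ℝ G] {f : E → F} {n : ℕ∞}

theorem contDiff_convolution_rescale (hf : LocallyIntegrable f μ) (L : F →L[ℝ] ℝ →L[ℝ] G)
    (hχ : ContDiff ℝ n χ) (hχ_supp : ∀ x, 1 < ‖x‖ → χ x = 0) (hc : 0 < c) :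
    ContDiff ℝ n (f ⋆[L, μ] rescale χ s c) :=
  (hasCompactSupport_rescale hχ_supp hc).contDiff_convolution_right L hf (contDiff_rescale hχ s c)

theorem contDiff_convolution_rescale_smul (hf : LocallyIntegrable f μ) (L : F →L[ℝ] E →L[ℝ] G)
    (hχ : ContDiff ℝ n χ) (hχ_supp : ∀ x, 1 < ‖x‖ → χ x = 0) (hc : 0 < c) :
    ContDiff ℝ n (f ⋆[L, μ] fun z => rescale χ s c z • z) :=
  (hasCompactSupport_rescale_smul hχ_supp hc).contDiff_convolution_right L hf
    ((contDiff_rescale hχ s c).smul contDiff_id)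

end Kernel

section Taylor

variable {F : Type*} [NormedAddCommGroup F] [InnerProductSpace ℝ F] [CompleteSpace F]

noncomputable def taylorRemainder (a : F → ℝ) (x y : F) : ℝ := a y - a x - ⟪y - x, gradient a x⟫

theorem continuous_taylorRemainder {a : F → ℝ} (ha : Continuous a) (x : F) :
    Continuous (taylorRemainder a x) :=
  (ha.sub continuous_const).sub ((continuous_id.sub continuous_const).inner continuous_const)

theorem abs_taylorRemainder_le {a : F → ℝ} (ha : Differentiable ℝ a) {K : ℝ≥0}
    (hK : LipschitzWith K (gradient a)) (x y : F) :
    |taylorRemainder a x y| ≤ K * ‖y - x‖ ^ 2 := by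
  have hfderiv : ∀ z, fderiv ℝ a z = InnerProductSpace.toDual ℝ F (gradient a z) := fun z =>
    (ha z).hasGradientAt.hasFDerivAt.fderiv
  have hbound : ∀ z ∈ closedBall x ‖y - x‖, ‖fderiv ℝ a z - fderiv ℝ a x‖ ≤ K * ‖y - x‖ := by
    intro z hz
    rw [hfderiv, hfderiv, ← map_sub, LinearIsometryEquiv.norm_map, ← dist_eq_norm]
    exact (hK.dist_le_mul z x).trans (by gcongr; exact hz)
  have key := (convex_closedBall x ‖y - x‖).norm_image_sub_le_of_norm_fderiv_le'
    (fun z _ => ha z) hbound (mem_closedBall_self (norm_nonneg _))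
    (mem_closedBall.mpr (dist_eq_norm y x).le)
  rw [hfderiv, InnerProductSpace.toDual_apply_apply, real_inner_comm] at key
  rw [taylorRemainder, ← Real.norm_eq_abs, sq, ← mul_assoc]
  exact key

end Taylor

section Decomposition

variable {E : Type*} [NormedAddCommGroup E] [InnerProductSpace ℝ E] [FiniteDimensional ℝ E]
  [MeasurableSpace E] [BorelSpace E] {μ : Measure E} [μ.IsAddHaarMeasure]

theorem integral_mul_add_inner_gradient_eq_convolution {ρ : E → ℝ} (hρ : Continuous ρ)
    (hρc : HasCompactSupport ρ) (hρ1 : ∫ z, ρ z ∂μ = 1) {f : E → ℝ} (hf : Continuous f)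
    (hgf : Continuous (gradient f)) (p x : E) :
    ∫ y, ρ (x - y) * (f y + ⟪x - y, gradient f y⟫) ∂μ =
      (taylorRemainder f p ⋆[ContinuousLinearMap.mul ℝ ℝ, μ] ρ) x +
      ((fun y => gradient f y - gradient f p) ⋆[innerSL ℝ, μ] fun z => ρ z • z) x +
      (f p + ⟪x - p, gradient f p⟫) := by
  set v := gradient f p
  have hint : ∀ h : E → ℝ, Continuous h → Integrable (fun y => ρ (x - y) * h y) μ :=
    fun h hh => ((hρ.comp (continuous_const.sub continuous_id)).mul hh
      ).integrable_of_hasCompactSupport (hρc.comp_homeomorph (Homeomorph.subLeft x)).mul_right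
  have h₁ : (taylorRemainder f p ⋆[ContinuousLinearMap.mul ℝ ℝ, μ] ρ) x =
      ∫ y, ρ (x - y) * (f y - f p - ⟪y - p, v⟫) ∂μ := by
    simp only [convolution_def, taylorRemainder, ContinuousLinearMap.mul_apply', mul_comm, v]
  have h₂ : ((fun y => gradient f y - v) ⋆[innerSL ℝ, μ] fun z => ρ z • z) x =
      ∫ y, ρ (x - y) * ⟪x - y, gradient f y - v⟫ ∂μ := by
    rw [convolution_def]
    congr 1 with y
    rw [innerSL_apply_apply, real_inner_smul_right, real_inner_comm]
  have h₃ : ∫ y, ρ (x - y) * (f p + ⟪x - p, v⟫) ∂μ = f p + ⟪x - p, v⟫ := by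
    rw [integral_mul_const, integral_sub_left_eq_self (fun z => ρ z) μ x, hρ1, one_mul]
  rw [h₁, h₂, ← h₃, ← integral_add, ← integral_add]
  · refine integral_congr_ae (Filter.Eventually.of_forall fun y => ?_)
    have hsplit : ⟪x - p, v⟫ = ⟪y - p, v⟫ + ⟪x - y, v⟫ := by
      rw [← inner_add_left, sub_add_sub_cancel']
    simp only [inner_sub_right, hsplit]
    ring
  · exact (hint _ (by fun_prop)).add (hint _ (by fun_prop))
  all_goals exact hint _ (by fun_prop)

end Decomposition

section Estimates

variable {E : Type} [NormedAddCommGroup E] [InnerProductSpace ℝ E] [FiniteDimensional ℝ E]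
  [MeasurableSpace E] [BorelSpace E] {μ : Measure E} [μ.IsAddHaarMeasure] {χ : E → ℝ}
  {s c C : ℝ} {a : E → ℝ} {K : ℝ≥0}

theorem norm_iteratedFDeriv_taylorRemainder_convolution_le (ha : Differentiable ℝ a)
    (hK : LipschitzWith K (gradient a)) {k : ℕ} (hχ : ContDiff ℝ k χ)
    (hχ_supp : ∀ x, 1 < ‖x‖ → χ x = 0) (hs : 0 ≤ s) (hc : 0 < c)
    (hC : ∀ z, ‖iteratedFDeriv ℝ k χ z‖ ≤ C) (x : E) :
    ‖iteratedFDeriv ℝ k (taylorRemainder a x ⋆[ContinuousLinearMap.mul ℝ ℝ, μ] rescale χ s c) x‖ ≤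
      K * c⁻¹ ^ 2 * (s * c ^ k * C) * μ.real (closedBall x c⁻¹) := by
  have hC₀ : 0 ≤ C := (norm_nonneg _).trans (hC 0)
  calc _ ≤ ‖ContinuousLinearMap.mul ℝ ℝ‖ * (K * c⁻¹ ^ 2) * (s * c ^ k * C) *
        μ.real (closedBall x c⁻¹) :=
        norm_iteratedFDeriv_convolution_le
          (continuous_taylorRemainder ha.continuous x).locallyIntegrable _ k
          (contDiff_rescale hχ s c) (inv_nonneg.2 hc.le) (tsupport_rescale_subset hχ_supp hc) x
          (fun y hy => (abs_taylorRemainder_le ha hK x y).trans (by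
            gcongr
            exact mem_closedBall_iff_norm.1 hy))
          (fun z _ => norm_iteratedFDeriv_rescale_le hχ hs hc.le hC z)
    _ ≤ 1 * (K * c⁻¹ ^ 2) * (s * c ^ k * C) * μ.real (closedBall x c⁻¹) := by
        gcongr
        exact ContinuousLinearMap.opNorm_mul_le ℝ ℝ
    _ = _ := by rw [one_mul]

theorem norm_iteratedFDeriv_gradient_sub_convolution_le (hK : LipschitzWith K (gradient a))
    {n : ℕ} (hχ : ContDiff ℝ (n + 1) χ)
    (hχ_supp : ∀ x, 1 < ‖x‖ → χ x = 0) (hs : 0 ≤ s) (hc : 0 < c)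
    (hC₁ : ∀ z, ‖iteratedFDeriv ℝ (n + 1) χ z‖ ≤ C) (hC₀ : ∀ z, ‖iteratedFDeriv ℝ n χ z‖ ≤ C)
    (x : E) :
    ‖iteratedFDeriv ℝ (n + 1)
        ((fun y => gradient a y - gradient a x) ⋆[innerSL ℝ, μ] fun z => rescale χ s c z • z) x‖ ≤
      K * c⁻¹ * ((n + 2) * s * c ^ n * C) * μ.real (closedBall x c⁻¹) := by
  have hC : 0 ≤ C := (norm_nonneg _).trans (hC₀ 0)
  calc _ ≤ ‖(innerSL ℝ : E →L[ℝ] E →L[ℝ] ℝ)‖ * (K * c⁻¹) * ((n + 2) * s * c ^ n * C) *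
        μ.real (closedBall x c⁻¹) :=
        norm_iteratedFDeriv_convolution_le
          (hK.continuous.sub continuous_const).locallyIntegrable _ (n + 1)
          ((contDiff_rescale hχ s c).smul contDiff_id) (inv_nonneg.2 hc.le)
          (tsupport_rescale_smul_subset hχ_supp hc) x
          (fun y hy => (dist_eq_norm _ _).symm.trans_le
            ((hK.dist_le_mul y x).trans (by gcongr; exact hy)))
          (fun z hz => norm_iteratedFDeriv_rescale_smul_le hχ hs hc hC₁ hC₀
            (mem_closedBall_zero_iff.1 hz))
    _ ≤ 1 * (K * c⁻¹) * ((n + 2) * s * c ^ n * C) * μ.real (closedBall x c⁻¹) := by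
        gcongr
        exact norm_innerSL_le ℝ
    _ = _ := by rw [one_mul]

end Estimates

section Regularization

local notation "ℝ³" => EuclideanSpace ℝ (Fin 3)

variable {χ a : ℝ³ → ℝ} {σ : ℝ}

theorem rpow_one_third_pow_three (hσ : 0 ≤ σ) : (σ ^ (1 / 3 : ℝ)) ^ 3 = σ := by
  rw [one_div]
  exact_mod_cast Real.rpow_inv_natCast_pow hσ three_ne_zero

theorem integral_rescale_eq_one (hχ_int : ∫ x, χ x = 1) (hσ : 0 < σ) :
    ∫ z, rescale χ σ (σ ^ (1 / 3 : ℝ)) z = 1 := by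
  simp only [rescale]
  rw [integral_const_mul, Measure.integral_comp_smul, finrank_euclideanSpace_fin,
    rpow_one_third_pow_three hσ.le, hχ_int, smul_eq_mul, mul_one, abs_of_pos (inv_pos.2 hσ),
    mul_inv_cancel₀ hσ.ne']

theorem reg_eq_convolution_add (hχ : Continuous χ) (hχ_supp : ∀ x, 1 < ‖x‖ → χ x = 0)
    (hχ_int : ∫ x, χ x = 1) (ha : Continuous a) (hga : Continuous (gradient a)) (hσ : 0 < σ)
    (p : ℝ³) :
    reg χ a σ = fun x =>
      (taylorRemainder a p ⋆[ContinuousLinearMap.mul ℝ ℝ] rescale χ σ (σ ^ (1 / 3 : ℝ))) x +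
      ((fun y => gradient a y - gradient a p) ⋆[innerSL ℝ]
        fun z => rescale χ σ (σ ^ (1 / 3 : ℝ)) z • z) x +
      (a p + ⟪x - p, gradient a p⟫) :=
  funext fun x => integral_mul_add_inner_gradient_eq_convolution
    (continuous_const.mul (hχ.comp (continuous_const_smul _)))
    (hasCompactSupport_rescale hχ_supp (by positivity)) (integral_rescale_eq_one hχ_int hσ)
    ha hga p x

theorem contDiff_reg (hχ : ContDiff ℝ ∞ χ) (hχ_supp : ∀ x, 1 < ‖x‖ → χ x = 0)
    (hχ_int : ∫ x, χ x = 1) (ha : Continuous a) (hga : Continuous (gradient a)) (hσ : 0 < σ) :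
    ContDiff ℝ ∞ (reg χ a σ) := by
  rw [reg_eq_convolution_add hχ.continuous hχ_supp hχ_int ha hga hσ 0]
  exact ((contDiff_convolution_rescale (continuous_taylorRemainder ha 0).locallyIntegrable _ hχ
    hχ_supp (by positivity)).add (contDiff_convolution_rescale_smul
      (hga.sub continuous_const).locallyIntegrable _ hχ hχ_supp (by positivity))).add
    (contDiff_const.add ((contDiff_id.sub contDiff_const).inner ℝ contDiff_const))

theorem iteratedFDeriv_reg_eq (hχ : ContDiff ℝ ∞ χ) (hχ_supp : ∀ x, 1 < ‖x‖ → χ x = 0)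
    (hχ_int : ∫ x, χ x = 1) (ha : Continuous a) (hga : Continuous (gradient a)) (hσ : 0 < σ)
    {k : ℕ} (hk : 2 ≤ k) (x : ℝ³) :
    iteratedFDeriv ℝ k (reg χ a σ) x =
      iteratedFDeriv ℝ k
        (taylorRemainder a x ⋆[ContinuousLinearMap.mul ℝ ℝ] rescale χ σ (σ ^ (1 / 3 : ℝ))) x +
      iteratedFDeriv ℝ k ((fun y => gradient a y - gradient a x) ⋆[innerSL ℝ]
        fun z => rescale χ σ (σ ^ (1 / 3 : ℝ)) z • z) x := by
  have hk_le : (k : WithTop ℕ∞) ≤ ∞ := WithTop.coe_le_coe.2 le_top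
  have hu : 0 < σ ^ (1 / 3 : ℝ) := by positivity
  have h₁ := (contDiff_convolution_rescale (continuous_taylorRemainder ha x).locallyIntegrable
    (ContinuousLinearMap.mul ℝ ℝ) hχ hχ_supp (μ := volume) (s := σ) hu).contDiffAt (x := x)
  have h₂ : ContDiffAt ℝ ∞ ((fun y => gradient a y - gradient a x) ⋆[innerSL ℝ]
      fun z => rescale χ σ (σ ^ (1 / 3 : ℝ)) z • z) x :=
    (contDiff_convolution_rescale_smul (hga.sub continuous_const).locallyIntegrable _ hχ hχ_supp
      hu).contDiffAt
  have haff : ∀ y, HasFDerivAt (fun y : ℝ³ => a x + ⟪y - x, gradient a x⟫)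
      (((innerSL ℝ).flip (gradient a x)).comp (ContinuousLinearMap.id ℝ ℝ³)) y := fun y =>
    (((innerSL ℝ).flip (gradient a x)).hasFDerivAt.comp y
      ((hasFDerivAt_id y).sub_const x)).const_add _
  have hA : ContDiff ℝ ∞ fun y : ℝ³ => a x + ⟪y - x, gradient a x⟫ :=
    contDiff_const.add ((contDiff_id.sub contDiff_const).inner ℝ contDiff_const)
  rw [reg_eq_convolution_add hχ.continuous hχ_supp hχ_int ha hga hσ x,
    fun_iteratedFDeriv_add_apply ((h₁.add h₂).of_le hk_le) (hA.contDiffAt.of_le hk_le),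
    fun_iteratedFDeriv_add_apply (h₁.of_le hk_le) (h₂.of_le hk_le),
    iteratedFDeriv_eq_zero_of_hasFDerivAt haff hk, add_zero]

theorem norm_iteratedFDeriv_reg_le (hχ : ContDiff ℝ ∞ χ) (hχ_supp : ∀ x, 1 < ‖x‖ → χ x = 0)
    (hχ_int : ∫ x, χ x = 1) (ha : Differentiable ℝ a) {K : ℝ≥0}
    (hK : LipschitzWith K (gradient a)) {n : ℕ} {C : ℝ}
    (hC₂ : ∀ z, ‖iteratedFDeriv ℝ (n + 2) χ z‖ ≤ C) (hC₁ : ∀ z, ‖iteratedFDeriv ℝ (n + 1) χ z‖ ≤ C)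
    (hσ : 0 < σ) (x : ℝ³) :
    ‖iteratedFDeriv ℝ (n + 2) (reg χ a σ) x‖ ≤
      (n + 4) * K * C * volume.real (ball (0 : ℝ³) 1) * σ ^ ((n : ℝ) / 3) := by
  rw [iteratedFDeriv_reg_eq hχ hχ_supp hχ_int ha.continuous hK.continuous hσ (by omega)]
  set u := σ ^ (1 / 3 : ℝ) with hu_def
  have hu : 0 < u := by positivity
  have hvol : volume.real (closedBall x u⁻¹) = u⁻¹ ^ 3 * volume.real (ball (0 : ℝ³) 1) := by
    rw [Measure.addHaar_real_closedBall _ _ (inv_nonneg.2 hu.le), finrank_euclideanSpace_fin]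
  have hσu : σ = u ^ 3 := (rpow_one_third_pow_three hσ.le).symm
  have hσn : σ ^ ((n : ℝ) / 3) = u ^ n := by
    rw [hu_def, ← Real.rpow_natCast, ← Real.rpow_mul hσ.le, one_div_mul_eq_div]
  calc _ ≤ _ := norm_add_le _ _
    _ ≤ K * u⁻¹ ^ 2 * (σ * u ^ (n + 2) * C) * volume.real (closedBall x u⁻¹) +
        K * u⁻¹ * ((↑(n + 1) + 2) * σ * u ^ (n + 1) * C) * volume.real (closedBall x u⁻¹) :=
      add_le_add
        (norm_iteratedFDeriv_taylorRemainder_convolution_le ha hK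
          (hχ.of_le (WithTop.coe_le_coe.2 le_top)) hχ_supp hσ.le hu hC₂ x)
        (norm_iteratedFDeriv_gradient_sub_convolution_le (n := n + 1) hK
          (hχ.of_le (WithTop.coe_le_coe.2 le_top)) hχ_supp hσ.le hu hC₂ hC₁ x)
    _ = _ := by
      rw [hvol, hσn, hσu]
      field_simp
      push_cast
      ring

end Regularization

theorem stmt2_general
    (χ : EuclideanSpace ℝ (Fin 3) → ℝ)
    (hχ_smooth : ContDiff ℝ (⊤ : ℕ∞) χ)
    (hχ_supp : ∀ x, 1 < ‖x‖ → χ x = 0)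
    (hχ_int : ∫ x, χ x = 1)
    (M : ℝ) (hM : 0 < M)
    (a : EuclideanSpace ℝ (Fin 3) → ℝ)
    (ha_diff : ∀ x, DifferentiableAt ℝ a x)
    (hgrad_lip : LipschitzWith M.toNNReal (gradient a)) :
    (∀ σ > 0, ContDiff ℝ (⊤ : ℕ∞) (reg χ a σ)) ∧
    ∀ k : ℕ, 2 ≤ k → ∃ C > 0, ∀ σ > 0, ∀ x : EuclideanSpace ℝ (Fin 3),
      ‖iteratedFDeriv ℝ k (reg χ a σ) x‖ ≤ C * σ ^ (((k : ℝ) - 2)/3) := by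
  have hχ_cs : HasCompactSupport χ := .of_support_subset_isCompact (isCompact_closedBall 0 1)
    fun x hx => mem_closedBall_zero_iff.2 (not_lt.1 fun h => hx (hχ_supp x h))
  refine ⟨fun σ hσ => contDiff_reg hχ_smooth hχ_supp hχ_int (Differentiable.continuous ha_diff)
    hgrad_lip.continuous hσ, fun k hk => ?_⟩
  obtain ⟨n, rfl⟩ : ∃ n, k = n + 2 := ⟨k - 2, by omega⟩
  obtain ⟨C, hC, hCχ⟩ :=
    exists_pos_bound_iteratedFDeriv_of_hasCompactSupport hχ_smooth hχ_cs (n + 2)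
  have hV : 0 < volume.real (ball (0 : EuclideanSpace ℝ (Fin 3)) 1) :=
    ENNReal.toReal_pos (measure_ball_pos volume 0 one_pos).ne' measure_ball_lt_top.ne
  refine ⟨(n + 4) * M * C * volume.real (ball (0 : EuclideanSpace ℝ (Fin 3)) 1), by positivity,
    fun σ hσ x => ?_⟩
  convert norm_iteratedFDeriv_reg_le hχ_smooth hχ_supp hχ_int ha_diff hgrad_lip
    (hCχ _ le_rfl) (hCχ _ (by omega)) hσ x using 3
  · rw [Real.coe_toNNReal _ hM.le]
  · push_cast
    ring

theorem stmt2
    (χ : EuclideanSpace ℝ (Fin 3) → ℝ)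
    (hχ_smooth : ContDiff ℝ (⊤ : ℕ∞) χ)
    (hχ_nonneg : ∀ x, 0 ≤ χ x)
    (hχ_supp : ∀ x, 1 < ‖x‖ → χ x = 0)
    (hχ_int : ∫ x, χ x = 1)
    (M : ℝ) (hM : 0 < M)
    (a : EuclideanSpace ℝ (Fin 3) → ℝ)
    (ha_diff : ∀ x, DifferentiableAt ℝ a x)
    (ha_bd : ∀ x, |a x| ≤ M)
    (hgrad_bd : ∀ x, ‖gradient a x‖ ≤ M)
    (hgrad_lip : LipschitzWith M.toNNReal (gradient a)) :
    (∀ σ > 0, ContDiff ℝ (⊤ : ℕ∞) (reg χ a σ)) ∧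
    ∀ k : ℕ, 2 ≤ k → ∃ C > 0, ∀ σ > 0, ∀ x : EuclideanSpace ℝ (Fin 3),
      ‖iteratedFDeriv ℝ k (reg χ a σ) x‖ ≤ C * σ ^ (((k : ℝ) - 2)/3) :=
  stmt2_general χ hχ_smooth hχ_supp hχ_int M hM a ha_diff hgrad_lip
end

section
/- Let A : ℝ³ → ℝ² be a C¹ map such that A and its derivative are bounded, and let θ ∈ ℝ² be a unit vector. Define b(t, x', x₃) := exp( −i ∫_0^t θ·A(x' − sθ, x₃) ds ). Then b solves the transport equation: for every t ∈ ℝ and every (x', x₃) ∈ ℝ² × ℝ, ∂_t b(t, x', x₃) + θ·∇_{x'} b(t, x', x₃) + i ( θ·A(x', x₃) ) b(t, x', x₃) = 0. -/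
open MeasureTheory Complex
open scoped RealInnerProductSpace

/-! Along the line `x' + rθ` the phase `∫₀ᵗ θ·A(x' - sθ, x₃) ds` is an integral of one continuous
function `f` over the window `[-r, t - r]`, so by the fundamental theorem of calculus its `t`-derivative
is `f t` and its derivative in direction `θ` is `f 0 - f t`; the sum of the two is `f 0 = θ·A(x', x₃)`,
and differentiating the exponential turns this into the transport equation. -/

theorem HasDerivAt.cexp_neg_I_mul_ofReal {φ : ℝ → ℝ} {φ' t : ℝ} (h : HasDerivAt φ φ' t) :
    HasDerivAt (fun τ => cexp (-I * φ τ)) (-I * φ' * cexp (-I * φ t)) t := by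
  simpa only [mul_comm] using (h.ofReal_comp.const_mul (-I)).cexp

theorem Continuous.hasDerivAt_intervalIntegral_comp_sub_right {E : Type*}
    [NormedAddCommGroup E] [NormedSpace ℝ E] [CompleteSpace E] {f : ℝ → E} (hf : Continuous f)
    (a b r : ℝ) :
    HasDerivAt (fun r => ∫ s in a..b, f (s - r)) (f (a - r) - f (b - r)) r := by
  have hF : ∀ u, HasDerivAt (fun u => ∫ s in (0 : ℝ)..u, f s) (f u) u := fun u =>
    (hf.integral_hasStrictDerivAt 0 u).hasDerivAt
  have hwindow : (fun r => ∫ s in a..b, f (s - r))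
      = fun r => (∫ s in (0 : ℝ)..b - r, f s) - ∫ s in (0 : ℝ)..a - r, f s := by
    funext r
    rw [intervalIntegral.integral_comp_sub_right,
      intervalIntegral.integral_interval_sub_left (hf.intervalIntegrable _ _)
        (hf.intervalIntegrable _ _)]
  have hb := (hF (b - r)).scomp r ((hasDerivAt_id r).const_sub b)
  have ha := (hF (a - r)).scomp r ((hasDerivAt_id r).const_sub a)
  rw [hwindow]
  convert hb.sub ha using 1
  · rfl
  · rw [neg_one_smul, neg_one_smul, sub_neg_eq_add, neg_add_eq_sub]

theorem stmt6_general
    (A : EuclideanSpace ℝ (Fin 2) × ℝ → EuclideanSpace ℝ (Fin 2))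
    (hA : ContDiff ℝ 1 A)
    (θ : EuclideanSpace ℝ (Fin 2))
    (b : ℝ → EuclideanSpace ℝ (Fin 2) → ℝ → ℂ)
    (hb : ∀ (t : ℝ) (x' : EuclideanSpace ℝ (Fin 2)) (x₃ : ℝ),
      b t x' x₃ =
        Complex.exp (-Complex.I *
          ((∫ s in (0:ℝ)..t, ⟪θ, A (x' - s • θ, x₃)⟫ : ℝ) : ℂ))) :
    ∀ (t : ℝ) (x' : EuclideanSpace ℝ (Fin 2)) (x₃ : ℝ),
      deriv (fun τ => b τ x' x₃) t
        + lineDeriv ℝ (fun y' => b t y' x₃) x' θ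
        + Complex.I * ((⟪θ, A (x', x₃)⟫ : ℝ) : ℂ) * b t x' x₃ = 0 := by
  intro t x' x₃
  set f : ℝ → ℝ := fun u => ⟪θ, A (x' - u • θ, x₃)⟫ with hf_def
  have hf : Continuous f := continuous_const.inner (hA.continuous.comp (by fun_prop))
  have htime : HasDerivAt (fun τ => b τ x' x₃) (-I * f t * b t x' x₃) t := by
    simp only [hb]
    exact (hf.integral_hasStrictDerivAt 0 t).hasDerivAt.cexp_neg_I_mul_ofReal
  have hline : HasLineDerivAt ℝ (fun y' => b t y' x₃)
      (-I * (f 0 - f t : ℝ) * b t x' x₃) x' θ := by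
    have hshift : ∀ r s : ℝ, x' + r • θ - s • θ = x' - (s - r) • θ := fun r s => by
      rw [sub_smul]; abel
    have := (hf.hasDerivAt_intervalIntegral_comp_sub_right 0 t 0).cexp_neg_I_mul_ofReal
    simp only [sub_zero] at this
    simpa only [HasLineDerivAt, hb, hshift] using this
  rw [htime.deriv, hline.lineDeriv]
  simp only [hf_def, zero_smul, sub_zero]
  push_cast
  ring

theorem stmt6
    (A : EuclideanSpace ℝ (Fin 2) × ℝ → EuclideanSpace ℝ (Fin 2))
    (hA : ContDiff ℝ 1 A)
    (hAbd : ∃ C, ∀ x, ‖A x‖ ≤ C ∧ ‖fderiv ℝ A x‖ ≤ C)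
    (θ : EuclideanSpace ℝ (Fin 2)) (hθ : ‖θ‖ = 1)
    (b : ℝ → EuclideanSpace ℝ (Fin 2) → ℝ → ℂ)
    (hb : ∀ (t : ℝ) (x' : EuclideanSpace ℝ (Fin 2)) (x₃ : ℝ),
      b t x' x₃ =
        Complex.exp (-Complex.I *
          ((∫ s in (0:ℝ)..t, ⟪θ, A (x' - s • θ, x₃)⟫ : ℝ) : ℂ))) :
    ∀ (t : ℝ) (x' : EuclideanSpace ℝ (Fin 2)) (x₃ : ℝ),
      deriv (fun τ => b τ x' x₃) t
        + lineDeriv ℝ (fun y' => b t y' x₃) x' θ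
        + Complex.I * ((⟪θ, A (x', x₃)⟫ : ℝ) : ℂ) * b t x' x₃ = 0 :=
  stmt6_general A hA θ b hb
end

section
/- Let R > 1 and let θ ∈ ℝ² be a unit vector. Let φ ∈ L²(ℝ³; ℂ) satisfy φ(y', y₃) = 0 for almost every (y', y₃) ∈ ℝ² × ℝ with |y'| ≤ R or |y'| ≥ R + 1. Then for every σ > 0, every T > 0 and every measurable set ω ⊆ {x' ∈ ℝ² : |x'| ≤ R − 1}, one has ∫_0^T ∫_ℝ ∫_ω |φ(x' − 2σtθ, x₃)|² dx' dx₃ dt ≤ (R/σ) ∫_{ℝ³} |φ(y)|² dy. -/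
/-!
For each time `t`, Fubini and translation invariance of Lebesgue measure bound the inner
integral over `ω × ℝ` by `‖φ‖²`. Once `σ t > R`, the shift `2σtθ` moves `ω` out of the
ball of radius `R + 1`, where `φ` vanishes, so the inner integral is zero; only `t ≤ R / σ`
contributes.
-/

open MeasureTheory Set

section Fubini

variable {α β G : Type*} [MeasurableSpace α] [MeasurableSpace β]
  [NormedAddCommGroup G] [NormedSpace ℝ G]
  {μ : Measure α} {ν : Measure β} [SFinite μ] [SFinite ν]

theorem integral_integral_restrict_eq_setIntegral_prod {f : α × β → G}
    (hf : Integrable f (μ.prod ν)) (s : Set α) :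
    ∫ y, ∫ x in s, f (x, y) ∂μ ∂ν = ∫ z in s ×ˢ univ, f z ∂μ.prod ν := by
  have h : (μ.restrict s).prod ν = (μ.prod ν).restrict (s ×ˢ univ) := by
    rw [← Measure.prod_restrict, Measure.restrict_univ]
  rw [← h, integral_prod_symm f (h ▸ hf.restrict)]

theorem integral_integral_restrict_eq_zero {f : α × β → G} (hf : Integrable f (μ.prod ν))
    {s : Set α} (h0 : ∀ᵐ z ∂μ.prod ν, z.1 ∈ s → f z = 0) :
    ∫ y, ∫ x in s, f (x, y) ∂μ ∂ν = 0 := by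
  rw [integral_integral_restrict_eq_setIntegral_prod hf]
  refine setIntegral_eq_zero_of_ae_eq_zero ?_
  filter_upwards [h0] with z hz hzs using hz hzs.1

end Fubini

section Translation

variable {E F : Type*} [MeasurableSpace E] [MeasurableSpace F] [AddGroup E] [MeasurableAdd E]
  {μ : Measure E} [μ.IsAddRightInvariant] {ν : Measure F} [SFinite μ] [SFinite ν]

theorem measurePreserving_sub_fst (v : E) :
    MeasurePreserving (fun z : E × F => (z.1 - v, z.2)) (μ.prod ν) (μ.prod ν) :=
  (measurePreserving_sub_right μ v).prod (MeasurePreserving.id ν)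

theorem integral_integral_restrict_sub_le {ψ : E × F → ℝ} (hψ : Integrable ψ (μ.prod ν))
    (hψ0 : ∀ z, 0 ≤ ψ z) (s : Set E) (v : E) :
    ∫ y, ∫ x in s, ψ (x - v, y) ∂μ ∂ν ≤ ∫ z, ψ z ∂μ.prod ν := by
  have hτ := measurePreserving_sub_fst (μ := μ) (ν := ν) v
  have hint : Integrable (fun z => ψ (z.1 - v, z.2)) (μ.prod ν) :=
    hτ.integrable_comp_of_integrable hψ
  calc ∫ y, ∫ x in s, ψ (x - v, y) ∂μ ∂ν
      = ∫ z in s ×ˢ univ, ψ (z.1 - v, z.2) ∂μ.prod ν :=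
        integral_integral_restrict_eq_setIntegral_prod hint s
    _ ≤ ∫ z, ψ (z.1 - v, z.2) ∂μ.prod ν :=
        setIntegral_le_integral hint (.of_forall fun _ => hψ0 _)
    _ = ∫ z, ψ z ∂μ.prod ν := by
        have hψτ : AEStronglyMeasurable ψ ((μ.prod ν).map fun z => (z.1 - v, z.2)) := by
          rw [hτ.map_eq]
          exact hψ.aestronglyMeasurable
        rw [← integral_map hτ.measurable.aemeasurable hψτ, hτ.map_eq]

end Translation

theorem setIntegral_Ioc_le_mul_of_eq_zero_of_lt {f : ℝ → ℝ} {a C : ℝ} (T : ℝ)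
    (ha : 0 ≤ a) (hC : 0 ≤ C) (hle : ∀ t, f t ≤ C) (hzero : ∀ t, a < t → f t = 0) :
    ∫ t in Ioc 0 T, f t ≤ a * C := by
  by_cases hf : IntegrableOn f (Ioc 0 T)
  swap
  · rw [integral_undef hf]
    positivity
  have hind : ∀ t, f t ≤ (Iic a).indicator (fun _ => C) t := by
    intro t
    by_cases ht : t ≤ a
    · simpa [indicator_of_mem (show t ∈ Iic a from ht)] using hle t
    · simp [indicator_of_notMem (show t ∉ Iic a from ht), hzero t (not_le.1 ht)]
  have hmeas : volume.real (Ioc 0 T ∩ Iic a) ≤ a := calc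
    volume.real (Ioc 0 T ∩ Iic a) ≤ volume.real (Ioc 0 a) :=
      measureReal_mono (fun t ht => ⟨ht.1.1, ht.2⟩) measure_Ioc_lt_top.ne
    _ = a := by simp [ha]
  calc ∫ t in Ioc 0 T, f t ≤ ∫ t in Ioc 0 T, (Iic a).indicator (fun _ => C) t :=
        setIntegral_mono hf
          ((integrableOn_const measure_Ioc_lt_top.ne).indicator measurableSet_Iic) hind
    _ = volume.real (Ioc 0 T ∩ Iic a) * C := by
        rw [setIntegral_indicator measurableSet_Iic, setIntegral_const, smul_eq_mul]
    _ ≤ a * C := mul_le_mul_of_nonneg_right hmeas hC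

theorem stmt9
    (R : ℝ) (hR : 1 < R)
    (θ : EuclideanSpace ℝ (Fin 2)) (hθ : ‖θ‖ = 1)
    (φ : EuclideanSpace ℝ (Fin 2) × ℝ → ℂ)
    (hφ : MemLp φ 2 volume)
    (hsupp : ∀ᵐ y : EuclideanSpace ℝ (Fin 2) × ℝ,
      (‖y.1‖ ≤ R ∨ R + 1 ≤ ‖y.1‖) → φ y = 0) :
    ∀ σ > 0, ∀ T > 0, ∀ ω : Set (EuclideanSpace ℝ (Fin 2)),
      MeasurableSet ω → ω ⊆ {x' | ‖x'‖ ≤ R - 1} →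
      (∫ t in Set.Ioc (0:ℝ) T, ∫ x₃ : ℝ, ∫ x' in ω,
          ‖φ (x' - (2 * σ * t) • θ, x₃)‖ ^ 2)
        ≤ (R / σ) * ∫ y : EuclideanSpace ℝ (Fin 2) × ℝ, ‖φ y‖ ^ 2 := by
  intro σ hσ T _ ω _ hωR
  have hψ : Integrable (fun y => ‖φ y‖ ^ 2) (volume.prod volume) := hφ.norm.integrable_sq
  refine setIntegral_Ioc_le_mul_of_eq_zero_of_lt T (div_nonneg (by linarith) hσ.le)
    (integral_nonneg fun _ => by positivity)
    (fun t => integral_integral_restrict_sub_le hψ (fun _ => by positivity) ω _) fun t ht => ?_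
  have hτ := measurePreserving_sub_fst (μ := volume) (ν := (volume : Measure ℝ))
    ((2 * σ * t) • θ)
  refine integral_integral_restrict_eq_zero (hτ.integrable_comp_of_integrable hψ) ?_
  filter_upwards [hτ.quasiMeasurePreserving.ae hsupp] with z hz hzω
  have hfar : R + 1 ≤ ‖z.1 - (2 * σ * t) • θ‖ := by
    have hx : ‖z.1‖ ≤ R - 1 := hωR hzω
    have hv : 2 * σ * t ≤ ‖(2 * σ * t) • θ‖ := by
      rw [norm_smul, hθ, mul_one]
      exact le_abs_self _
    have hσt : R < t * σ := (div_lt_iff₀ hσ).1 ht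
    linarith [norm_sub_norm_le ((2 * σ * t) • θ) z.1, norm_sub_rev ((2 * σ * t) • θ) z.1]
  simp [hz (Or.inr hfar)]
end

section
/- For every M > 0, C₀ > 0, ε ∈ (0,1) and σ* ≥ 1 there exist constants C > 0 and μ ∈ (0,1) such that the following holds: if f ∈ L²(ℝ²; ℂ) and δ > 0 satisfy ∫_{ℝ²} (1 + |ξ|²) |f̂(ξ)|² dξ ≤ M² and |f̂(ξ)| ≤ C₀ (1 + |ξ|²)⁴ ( σ⁶ δ + σ^{−ε} ) for every σ > σ* and almost every ξ ∈ ℝ², then ‖f‖_{L²(ℝ²)} ≤ C δ^μ. -/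
/-!
With `σ = σstar + δ^(-1/(6+ε))` the two terms of the pointwise bound balance, so
`|f̂ ξ| ≲ (1 + |ξ|²)⁴ δ^(ε/(6+ε))`. Splitting `‖f̂‖₂²` at frequency radius `R`, the low part is
`≲ R² (R⁸ δ^(ε/(6+ε)))²` and the high part is at most `M² / R²` by the weighted bound; the choice
`R = δ^(-μ)` with `μ = ε / (10 (6 + ε))` makes both `≲ δ^(2μ)`, and Plancherel transfers the
estimate to `f`.
-/

open MeasureTheory
open scoped RealInnerProductSpace ENNReal

theorem eLpNorm_two_le_ofReal {α E : Type*} [MeasurableSpace α] [NormedAddCommGroup E]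
    {μ : Measure α} {f : α → E} {c : ℝ} (hc : 0 ≤ c)
    (h : ∫⁻ x, ENNReal.ofReal (‖f x‖ ^ 2) ∂μ ≤ ENNReal.ofReal (c ^ 2)) :
    eLpNorm f 2 μ ≤ ENNReal.ofReal c := by
  rw [← ENNReal.pow_le_pow_left_iff two_ne_zero, ← ENNReal.ofReal_pow hc]
  have := eLpNorm_nnreal_pow_eq_lintegral (μ := μ) (f := f) (p := 2) two_ne_zero
  simp only [ENNReal.coe_ofNat, NNReal.coe_ofNat, ENNReal.rpow_two] at this
  rw [this]
  simpa only [← ofReal_norm, ENNReal.ofReal_pow (norm_nonneg _)] using h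

theorem lintegral_sq_le_of_bound_on_ball {E F : Type*} [NormedAddCommGroup E] [MeasurableSpace E]
    [OpensMeasurableSpace E] [NormedAddCommGroup F] (μ : Measure E) (g : E → F) {R A : ℝ}
    (hR : 0 < R) (hA : ∀ᵐ ξ ∂μ, ‖ξ‖ < R → ‖g ξ‖ ≤ A) :
    ∫⁻ ξ, ENNReal.ofReal (‖g ξ‖ ^ 2) ∂μ ≤
      ENNReal.ofReal (A ^ 2) * μ (Metric.ball 0 R) +
        ENNReal.ofReal (R ^ 2)⁻¹ * ∫⁻ ξ, ENNReal.ofReal ((1 + ‖ξ‖ ^ 2) * ‖g ξ‖ ^ 2) ∂μ := by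
  rw [← lintegral_add_compl _ Metric.isOpen_ball.measurableSet]
  gcongr ?_ + ?_
  · rw [← setLIntegral_const]
    refine setLIntegral_mono_ae aemeasurable_const ?_
    filter_upwards [hA] with ξ hξ hmem
    exact ENNReal.ofReal_le_ofReal
      (pow_le_pow_left₀ (norm_nonneg _) (hξ (mem_ball_zero_iff.mp hmem)) 2)
  · calc ∫⁻ ξ in (Metric.ball 0 R)ᶜ, ENNReal.ofReal (‖g ξ‖ ^ 2) ∂μ
        ≤ ∫⁻ ξ in (Metric.ball 0 R)ᶜ,
            ENNReal.ofReal (R ^ 2)⁻¹ * ENNReal.ofReal ((1 + ‖ξ‖ ^ 2) * ‖g ξ‖ ^ 2) ∂μ := by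
          refine setLIntegral_mono' Metric.isOpen_ball.measurableSet.compl fun ξ hξ => ?_
          have hRξ : R ^ 2 ≤ ‖ξ‖ ^ 2 := pow_le_pow_left₀ hR.le
            (by simpa only [Set.mem_compl_iff, mem_ball_zero_iff, not_lt] using hξ) 2
          rw [← ENNReal.ofReal_mul (by positivity)]
          refine ENNReal.ofReal_le_ofReal ?_
          rw [le_inv_mul_iff₀ (by positivity)]
          gcongr
          linarith
      _ ≤ _ := by
          rw [lintegral_const_mul' _ _ ENNReal.ofReal_ne_top]
          gcongr
          exact Measure.restrict_le_self

theorem lintegral_sq_le_of_weighted_of_pointwise {F : Type*} [NormedAddCommGroup F]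
    {g : EuclideanSpace ℝ (Fin 2) → F} {K M D : ℝ} (hK : 0 ≤ K) (hD₀ : 0 < D) (hD₁ : D ≤ 1)
    (hI : ∫⁻ ξ, ENNReal.ofReal ((1 + ‖ξ‖ ^ 2) * ‖g ξ‖ ^ 2) ≤ ENNReal.ofReal (M ^ 2))
    (hg : ∀ᵐ ξ, ‖g ξ‖ ≤ K * (1 + ‖ξ‖ ^ 2) ^ 4 * D ^ 10) :
    ∫⁻ ξ, ENNReal.ofReal (‖g ξ‖ ^ 2) ≤ ENNReal.ofReal ((256 * Real.pi * K ^ 2 + M ^ 2) * D ^ 2) := by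
  have hA : ∀ᵐ ξ : EuclideanSpace ℝ (Fin 2), ‖ξ‖ < D⁻¹ → ‖g ξ‖ ≤ 16 * K * D ^ 2 := by
    filter_upwards [hg] with ξ hξ hlt
    have hD : 1 ≤ (D⁻¹) ^ 2 := one_le_pow₀ ((one_le_inv₀ hD₀).2 hD₁)
    have hξD : ‖ξ‖ ^ 2 ≤ (D⁻¹) ^ 2 := pow_le_pow_left₀ (norm_nonneg _) hlt.le 2
    calc ‖g ξ‖ ≤ K * (1 + ‖ξ‖ ^ 2) ^ 4 * D ^ 10 := hξ
      _ ≤ K * (2 * (D⁻¹) ^ 2) ^ 4 * D ^ 10 := by gcongr; linarith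
      _ = 16 * K * D ^ 2 := by field_simp; ring
  refine (lintegral_sq_le_of_bound_on_ball volume g (inv_pos.2 hD₀) hA).trans ?_
  grw [hI]
  rw [EuclideanSpace.volume_ball_fin_two, ← ENNReal.ofReal_pow (by positivity),
    ← ENNReal.ofReal_mul (by positivity), ← ENNReal.ofReal_mul (by positivity),
    ← ENNReal.ofReal_mul (by positivity), ← ENNReal.ofReal_add (by positivity) (by positivity)]
  refine ENNReal.ofReal_le_ofReal (le_of_eq ?_)
  field_simp
  ring

theorem exists_gt_pow_mul_add_rpow_neg_le {s δ ε : ℝ} (p : ℕ) (hs : 0 ≤ s) (hδ₀ : 0 < δ)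
    (hδ₁ : δ ≤ 1) (hε : 0 < ε) :
    ∃ σ > s, σ ^ p * δ + σ ^ (-ε) ≤ ((s + 1) ^ p + 1) * δ ^ (ε / (p + ε)) := by
  have hpε : 0 < (p : ℝ) + ε := by positivity
  set t := δ ^ (-(p + ε)⁻¹)
  have ht : 1 ≤ t := Real.one_le_rpow_of_pos_of_le_one_of_nonpos hδ₀ hδ₁
    (neg_nonpos.2 (inv_nonneg.2 hpε.le))
  have ht₀ : 0 < t := by linarith
  have hδt : t ^ (-(p + ε)) = δ := by
    rw [← Real.rpow_mul hδ₀.le, neg_mul_neg, inv_mul_cancel₀ hpε.ne', Real.rpow_one]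
  have htε : t ^ (-ε) = δ ^ (ε / (p + ε)) := by
    rw [← Real.rpow_mul hδ₀.le]
    ring_nf
  have htp : t ^ p * t ^ (-(p + ε)) = t ^ (-ε) := by
    rw [← Real.rpow_natCast, ← Real.rpow_add ht₀]
    ring_nf
  refine ⟨s + t, by linarith, ?_⟩
  rw [← htε, ← hδt]
  calc (s + t) ^ p * t ^ (-(p + ε)) + (s + t) ^ (-ε)
      ≤ ((s + 1) * t) ^ p * t ^ (-(p + ε)) + t ^ (-ε) := by
        gcongr ?_ + ?_
        · gcongr
          nlinarith
        · exact Real.rpow_le_rpow_of_nonpos ht₀ (by linarith) (by linarith)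
    _ = ((s + 1) ^ p + 1) * t ^ (-ε) := by rw [mul_pow, mul_assoc, htp]; ring

/- `g` stands for `f̂`: of the Fourier transform only the Plancherel identity is retained. -/
theorem stmt15_general
    (M C₀ ε σstar : ℝ) (hC₀ : 0 < C₀)
    (hε : ε ∈ Set.Ioo (0:ℝ) 1) (hσstar : 1 ≤ σstar) :
    ∃ C > 0, ∃ μ ∈ Set.Ioo (0:ℝ) 1,
      ∀ (f g : EuclideanSpace ℝ (Fin 2) → ℂ) (δ : ℝ), 0 < δ →
        MemLp f 2 volume →
        eLpNorm g 2 volume = eLpNorm f 2 volume →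
        (∫⁻ ξ : EuclideanSpace ℝ (Fin 2),
            ENNReal.ofReal ((1 + ‖ξ‖ ^ 2) * ‖g ξ‖ ^ 2)) ≤ ENNReal.ofReal (M ^ 2) →
        (∀ σ > σstar, ∀ᵐ ξ : EuclideanSpace ℝ (Fin 2),
            ‖g ξ‖ ≤ C₀ * (1 + ‖ξ‖ ^ 2) ^ 4 * (σ ^ 6 * δ + σ ^ (-ε))) →
        eLpNorm f 2 volume ≤ ENNReal.ofReal (C * δ ^ μ) := by
  obtain ⟨hε₀, -⟩ := hε
  set K := C₀ * ((σstar + 1) ^ 6 + 1)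
  have hK : 0 < K := by positivity
  set C := √(256 * Real.pi * K ^ 2 + M ^ 2)
  have hC : C ^ 2 = 256 * Real.pi * K ^ 2 + M ^ 2 := Real.sq_sqrt (by positivity)
  set μ := ε / (10 * (6 + ε)) with hμ_def
  have hμ : 0 < μ := by positivity
  refine ⟨C, by positivity, μ, ⟨hμ, (div_lt_one (by positivity)).2 (by linarith)⟩, ?_⟩
  intro f g δ hδ _ hPl hI hσ
  rw [← hPl]
  refine eLpNorm_two_le_ofReal (by positivity) ?_
  rw [mul_pow, hC]
  rcases le_or_gt 1 δ with hδ₁ | hδ₁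
  · have hδμ_ge : 1 ≤ (δ ^ μ) ^ 2 := one_le_pow₀ (Real.one_le_rpow hδ₁ hμ.le)
    calc ∫⁻ ξ, ENNReal.ofReal (‖g ξ‖ ^ 2)
        ≤ ∫⁻ ξ, ENNReal.ofReal ((1 + ‖ξ‖ ^ 2) * ‖g ξ‖ ^ 2) :=
          lintegral_mono fun ξ => ENNReal.ofReal_le_ofReal (by nlinarith [sq_nonneg ‖ξ‖])
      _ ≤ _ := hI.trans (ENNReal.ofReal_le_ofReal (by nlinarith [Real.pi_pos]))
  · obtain ⟨σ, hσ_gt, hσ_le⟩ :=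
      exists_gt_pow_mul_add_rpow_neg_le 6 (by linarith : 0 ≤ σstar) hδ hδ₁.le hε₀
    have hδμ : δ ^ (ε / ((6 : ℕ) + ε)) = (δ ^ μ) ^ 10 := by
      rw [← Real.rpow_natCast, ← Real.rpow_mul hδ.le, hμ_def]
      push_cast
      field_simp
    rw [hδμ] at hσ_le
    refine lintegral_sq_le_of_weighted_of_pointwise hK.le (by positivity)
      (Real.rpow_le_one hδ.le hδ₁.le hμ.le) hI ?_
    filter_upwards [hσ σ hσ_gt] with ξ hξ
    calc ‖g ξ‖ ≤ C₀ * (1 + ‖ξ‖ ^ 2) ^ 4 * (σ ^ 6 * δ + σ ^ (-ε)) := hξ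
      _ ≤ C₀ * (1 + ‖ξ‖ ^ 2) ^ 4 * (((σstar + 1) ^ 6 + 1) * (δ ^ μ) ^ 10) := by gcongr
      _ = K * (1 + ‖ξ‖ ^ 2) ^ 4 * (δ ^ μ) ^ 10 := by ring

theorem stmt15
    (M C₀ ε σstar : ℝ) (hM : 0 < M) (hC₀ : 0 < C₀)
    (hε : ε ∈ Set.Ioo (0:ℝ) 1) (hσstar : 1 ≤ σstar) :
    ∃ C > 0, ∃ μ ∈ Set.Ioo (0:ℝ) 1,
      ∀ (f g : EuclideanSpace ℝ (Fin 2) → ℂ) (δ : ℝ), 0 < δ →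
        MemLp f 2 volume →
        eLpNorm g 2 volume = eLpNorm f 2 volume →
        (∫⁻ ξ : EuclideanSpace ℝ (Fin 2),
            ENNReal.ofReal ((1 + ‖ξ‖ ^ 2) * ‖g ξ‖ ^ 2)) ≤ ENNReal.ofReal (M ^ 2) →
        (∀ σ > σstar, ∀ᵐ ξ : EuclideanSpace ℝ (Fin 2),
            ‖g ξ‖ ≤ C₀ * (1 + ‖ξ‖ ^ 2) ^ 4 * (σ ^ 6 * δ + σ ^ (-ε))) →
        eLpNorm f 2 volume ≤ ENNReal.ofReal (C * δ ^ μ) :=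
  stmt15_general M C₀ ε σstar hC₀ hε hσstar
end

section
/- Let R > 1 and let θ ∈ ℝ² be a unit vector. Let B : ℝ³ → ℝ² be bounded and measurable with B(x', x₃) = 0 whenever |x'| > R, and let φ₁, φ₂ ∈ L²(ℝ³; ℂ) satisfy φ_j(y', y₃) = 0 for almost every (y', y₃) with |y'| ≤ R or |y'| ≥ R + 1 (j = 1, 2). Then for every σ > 0 and every T > 0, σ · | ∫_0^T ∫_{ℝ³} ( θ·B(x', x₃) ) conj(φ₁(x' − 2σtθ, x₃)) φ₂(x' − 2σtθ, x₃) dx' dx₃ dt | ≤ (R + 1) (sup_{ℝ³} |B|) ‖φ₁‖_{L²(ℝ³)} ‖φ₂‖_{L²(ℝ³)}. -/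
/-!
For each fixed time `t`, the inner integral pairs `φ₁` and `φ₂`, both translated by `2σtθ`,
against the bounded weight `θ · B`; by Cauchy–Schwarz and translation invariance of Lebesgue
measure it is at most `sup |B| ‖φ₁‖ ‖φ₂‖`. Once `2σt ≥ 2R + 1`, the translated `φ₁` lives where
`|x'| > R`, off the support of `B`, so the inner integral vanishes. Hence only times
`t < (R + 1) / σ` contribute, which gives the factor `(R + 1) / σ`.
-/

open MeasureTheory
open scoped RealInnerProductSpace

theorem integral_norm_mul_norm_le_sqrt_mul_sqrt {α E F : Type*} [MeasurableSpace α]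
    {μ : Measure α} [NormedAddCommGroup E] [NormedAddCommGroup F] {f : α → E} {g : α → F}
    (hf : MemLp f 2 μ) (hg : MemLp g 2 μ) :
    ∫ a, ‖f a‖ * ‖g a‖ ∂μ ≤ √(∫ a, ‖f a‖ ^ 2 ∂μ) * √(∫ a, ‖g a‖ ^ 2 ∂μ) := by
  have h2 : ENNReal.ofReal 2 = 2 := by norm_num
  have key := integral_mul_le_Lp_mul_Lq_of_nonneg Real.HolderConjugate.two_two
    (.of_forall fun a => norm_nonneg (f a)) (.of_forall fun a => norm_nonneg (g a))
    (h2 ▸ hf.norm) (h2 ▸ hg.norm)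
  simpa only [Real.rpow_two, Real.sqrt_eq_rpow, one_div] using key

theorem norm_integral_mul_conj_mul_le {α : Type*} [MeasurableSpace α] {μ : Measure α}
    {w f g : α → ℂ} {K : ℝ} (hK : 0 ≤ K) (hw : ∀ a, ‖w a‖ ≤ K)
    (hf : MemLp f 2 μ) (hg : MemLp g 2 μ) :
    ‖∫ a, w a * starRingEnd ℂ (f a) * g a ∂μ‖
      ≤ K * √(∫ a, ‖f a‖ ^ 2 ∂μ) * √(∫ a, ‖g a‖ ^ 2 ∂μ) := by
  have hint : Integrable (fun a => ‖f a‖ * ‖g a‖) μ := hf.norm.integrable_mul hg.norm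
  calc ‖∫ a, w a * starRingEnd ℂ (f a) * g a ∂μ‖
      ≤ ∫ a, ‖w a * starRingEnd ℂ (f a) * g a‖ ∂μ := norm_integral_le_integral_norm _
    _ ≤ ∫ a, K * (‖f a‖ * ‖g a‖) ∂μ := by
        refine integral_mono_of_nonneg (.of_forall fun a => norm_nonneg _) (hint.const_mul K)
          (.of_forall fun a => ?_)
        simp only [norm_mul, RCLike.norm_conj, ← mul_assoc]
        gcongr
        exact hw a
    _ = K * ∫ a, ‖f a‖ * ‖g a‖ ∂μ := integral_const_mul _ _
    _ ≤ K * √(∫ a, ‖f a‖ ^ 2 ∂μ) * √(∫ a, ‖g a‖ ^ 2 ∂μ) := by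
        rw [mul_assoc]
        gcongr
        exact integral_norm_mul_norm_le_sqrt_mul_sqrt hf hg

section Translation

variable {E F : Type*} [AddGroup E] [MeasurableSpace E] [MeasurableAdd E] [MeasurableSpace F]
  {μ : Measure E} [μ.IsAddRightInvariant] [SFinite μ] {ν : Measure F} [SFinite ν]

theorem measurePreserving_prodMap_sub_right (v : E) :
    MeasurePreserving (fun p : E × F => (p.1 - v, p.2)) (μ.prod ν) (μ.prod ν) :=
  (measurePreserving_sub_right μ v).prod (.id ν)

theorem integral_comp_prodMap_sub_right {G : Type*} [NormedAddCommGroup G] [NormedSpace ℝ G]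
    (v : E) (g : E × F → G) :
    ∫ p, g (p.1 - v, p.2) ∂μ.prod ν = ∫ p, g p ∂μ.prod ν :=
  (measurePreserving_prodMap_sub_right v).integral_comp
    ((MeasurableEquiv.subRight v).prodCongr (MeasurableEquiv.refl F)).measurableEmbedding g

theorem MeasureTheory.MemLp.comp_prodMap_sub_right {G : Type*} [NormedAddCommGroup G]
    {g : E × F → G} {p : ENNReal} (hg : MemLp g p (μ.prod ν)) (v : E) :
    MemLp (fun x => g (x.1 - v, x.2)) p (μ.prod ν) :=
  hg.comp_measurePreserving (measurePreserving_prodMap_sub_right v)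

end Translation

theorem integral_mul_conj_comp_sub_eq_zero {E F : Type*} [NormedAddCommGroup E]
    [MeasurableSpace E] [MeasurableAdd E] [MeasurableSpace F]
    {μ : Measure E} [μ.IsAddRightInvariant] [SFinite μ] {ν : Measure F} [SFinite ν]
    {w f g : E × F → ℂ} {R : ℝ} {v : E}
    (hw : ∀ x, R < ‖x.1‖ → w x = 0) (hf : ∀ᵐ y ∂μ.prod ν, R + 1 ≤ ‖y.1‖ → f y = 0)
    (hv : 2 * R + 1 ≤ ‖v‖) :
    ∫ p, w p * starRingEnd ℂ (f (p.1 - v, p.2)) * g (p.1 - v, p.2) ∂μ.prod ν = 0 := by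
  refine integral_eq_zero_of_ae ?_
  filter_upwards [(measurePreserving_prodMap_sub_right v).quasiMeasurePreserving.ae hf]
    with p hp
  by_cases hpR : R < ‖p.1‖
  · simp [hw p hpR]
  · have hfar : R + 1 ≤ ‖p.1 - v‖ := by
      have := norm_sub_norm_le v p.1
      rw [norm_sub_rev] at this
      linarith
    simp [hp hfar]

theorem norm_setIntegral_Ioc_le_of_eq_zero_of_le {E : Type*} [NormedAddCommGroup E]
    [NormedSpace ℝ E] {F : ℝ → E} {K t₀ : ℝ} (T : ℝ) (ht₀ : 0 ≤ t₀) (hK : ∀ t, ‖F t‖ ≤ K)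
    (hF : ∀ t, t₀ ≤ t → F t = 0) :
    ‖∫ t in Set.Ioc 0 T, F t‖ ≤ K * t₀ := by
  have hK0 : 0 ≤ K := (norm_nonneg _).trans (hK 0)
  have hsupp : ∫ t in Set.Ioc 0 T, F t = ∫ t in Set.Ioc 0 T ∩ Set.Iio t₀, F t :=
    setIntegral_eq_of_subset_of_forall_sdiff_eq_zero measurableSet_Ioc Set.inter_subset_left
      fun t ht => hF t (not_lt.mp fun h => ht.2 ⟨ht.1, h⟩)
  have hvol : volume.real (Set.Ioc 0 T ∩ Set.Iio t₀) ≤ t₀ :=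
    calc volume.real (Set.Ioc 0 T ∩ Set.Iio t₀) ≤ volume.real (Set.Ioc 0 t₀) :=
          measureReal_mono (fun t ht => ⟨ht.1.1, ht.2.le⟩) measure_Ioc_lt_top.ne
      _ = t₀ := by simp [ht₀]
  rw [hsupp]
  calc ‖∫ t in Set.Ioc 0 T ∩ Set.Iio t₀, F t‖
      ≤ K * volume.real (Set.Ioc 0 T ∩ Set.Iio t₀) :=
        norm_setIntegral_le_of_norm_le_const
          ((measure_mono Set.inter_subset_left).trans_lt measure_Ioc_lt_top) fun t _ => hK t
    _ ≤ K * t₀ := by gcongr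

theorem stmt16_general
    (R : ℝ) (hR : 1 < R)
    (θ : EuclideanSpace ℝ (Fin 2)) (hθ : ‖θ‖ = 1)
    (B : EuclideanSpace ℝ (Fin 2) × ℝ → EuclideanSpace ℝ (Fin 2))
    (hBbd : ∃ C, ∀ x, ‖B x‖ ≤ C)
    (hBsupp : ∀ x : EuclideanSpace ℝ (Fin 2) × ℝ, R < ‖x.1‖ → B x = 0)
    (φ₁ φ₂ : EuclideanSpace ℝ (Fin 2) × ℝ → ℂ)
    (hφ₁ : MemLp φ₁ 2 volume) (hφ₂ : MemLp φ₂ 2 volume)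
    (h₁ : ∀ᵐ y : EuclideanSpace ℝ (Fin 2) × ℝ, (‖y.1‖ ≤ R ∨ R + 1 ≤ ‖y.1‖) → φ₁ y = 0)
    (σ T : ℝ) (hσ : 0 < σ) :
    σ * ‖∫ t in Set.Ioc (0:ℝ) T, ∫ p : EuclideanSpace ℝ (Fin 2) × ℝ,
          ((⟪θ, B p⟫ : ℝ) : ℂ)
            * (starRingEnd ℂ) (φ₁ (p.1 - (2 * σ * t) • θ, p.2))
            * φ₂ (p.1 - (2 * σ * t) • θ, p.2)‖
      ≤ (R + 1) * (⨆ x : EuclideanSpace ℝ (Fin 2) × ℝ, ‖B x‖)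
          * Real.sqrt (∫ y : EuclideanSpace ℝ (Fin 2) × ℝ, ‖φ₁ y‖ ^ 2)
          * Real.sqrt (∫ y : EuclideanSpace ℝ (Fin 2) × ℝ, ‖φ₂ y‖ ^ 2) := by
  set C := ⨆ x, ‖B x‖
  obtain ⟨C₀, hC₀⟩ := hBbd
  have hBC (x) : ‖B x‖ ≤ C := le_ciSup ⟨C₀, by rintro _ ⟨y, rfl⟩; exact hC₀ y⟩ x
  have hw (p) : ‖((⟪θ, B p⟫ : ℝ) : ℂ)‖ ≤ C := by
    rw [Complex.norm_real, Real.norm_eq_abs]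
    exact (abs_real_inner_le_norm θ (B p)).trans (by rw [hθ, one_mul]; exact hBC p)
  have hw_supp (p : EuclideanSpace ℝ (Fin 2) × ℝ) (hp : R < ‖p.1‖) :
      ((⟪θ, B p⟫ : ℝ) : ℂ) = 0 := by
    simp [hBsupp p hp]
  have hbound (t : ℝ) := norm_integral_mul_conj_mul_le (Real.iSup_nonneg fun x => norm_nonneg _)
    hw (hφ₁.comp_prodMap_sub_right ((2 * σ * t) • θ)) (hφ₂.comp_prodMap_sub_right ((2 * σ * t) • θ))
  simp only [integral_comp_prodMap_sub_right _ fun y => ‖φ₁ y‖ ^ 2,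
    integral_comp_prodMap_sub_right _ fun y => ‖φ₂ y‖ ^ 2] at hbound
  have hvanish (t : ℝ) (ht : (R + 1) / σ ≤ t) := integral_mul_conj_comp_sub_eq_zero
    (v := (2 * σ * t) • θ) (g := φ₂) hw_supp (h₁.mono fun y hy hfar => hy (Or.inr hfar)) (by
      rw [div_le_iff₀ hσ] at ht
      rw [norm_smul, hθ, mul_one, Real.norm_of_nonneg (by linarith)]
      linarith)
  calc _ ≤ σ * (C * √(∫ y, ‖φ₁ y‖ ^ 2) * √(∫ y, ‖φ₂ y‖ ^ 2) * ((R + 1) / σ)) := by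
        gcongr
        exact norm_setIntegral_Ioc_le_of_eq_zero_of_le T (by bound) hbound hvanish
    _ = _ := by field_simp

theorem stmt16
    (R : ℝ) (hR : 1 < R)
    (θ : EuclideanSpace ℝ (Fin 2)) (hθ : ‖θ‖ = 1)
    (B : EuclideanSpace ℝ (Fin 2) × ℝ → EuclideanSpace ℝ (Fin 2))
    (hBmeas : Measurable B) (hBbd : ∃ C, ∀ x, ‖B x‖ ≤ C)
    (hBsupp : ∀ x : EuclideanSpace ℝ (Fin 2) × ℝ, R < ‖x.1‖ → B x = 0)
    (φ₁ φ₂ : EuclideanSpace ℝ (Fin 2) × ℝ → ℂ)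
    (hφ₁ : MemLp φ₁ 2 volume) (hφ₂ : MemLp φ₂ 2 volume)
    (h₁ : ∀ᵐ y : EuclideanSpace ℝ (Fin 2) × ℝ, (‖y.1‖ ≤ R ∨ R + 1 ≤ ‖y.1‖) → φ₁ y = 0)
    (h₂ : ∀ᵐ y : EuclideanSpace ℝ (Fin 2) × ℝ, (‖y.1‖ ≤ R ∨ R + 1 ≤ ‖y.1‖) → φ₂ y = 0)
    (σ T : ℝ) (hσ : 0 < σ) (hT : 0 < T) :
    σ * ‖∫ t in Set.Ioc (0:ℝ) T, ∫ p : EuclideanSpace ℝ (Fin 2) × ℝ,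
          ((⟪θ, B p⟫ : ℝ) : ℂ)
            * (starRingEnd ℂ) (φ₁ (p.1 - (2 * σ * t) • θ, p.2))
            * φ₂ (p.1 - (2 * σ * t) • θ, p.2)‖
      ≤ (R + 1) * (⨆ x : EuclideanSpace ℝ (Fin 2) × ℝ, ‖B x‖)
          * Real.sqrt (∫ y : EuclideanSpace ℝ (Fin 2) × ℝ, ‖φ₁ y‖ ^ 2)
          * Real.sqrt (∫ y : EuclideanSpace ℝ (Fin 2) × ℝ, ‖φ₂ y‖ ^ 2) :=
  stmt16_general R hR θ hθ B hBbd hBsupp φ₁ φ₂ hφ₁ hφ₂ h₁ σ T hσ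
end

section
/- Let A : ℝ³ → ℝ² be a C¹ map such that A and its derivative are bounded, let θ ∈ ℝ² be a unit vector, let L > 0, let j ∈ {1,2,3}, and let ψ : ℝ³ → ℂ be C¹ with compact support. Then ∫_{ℝ³} ∂_{x_j}(ψ²)(x) exp( −i ∫_0^L θ·A(x' + sθ, x₃) ds ) dx = i ∫_{ℝ³} ψ(x)² ( ∫_0^L θ·∂_{x_j}A(x' + sθ, x₃) ds ) exp( −i ∫_0^L θ·A(x' + sθ, x₃) ds ) dx, where ∂_{x_j}A denotes the componentwise partial derivative of A with respect to x_j evaluated at (x' + sθ, x₃). -/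
open MeasureTheory
open scoped RealInnerProductSpace

/-- The three coordinate directions of `ℝ³ = ℝ² × ℝ`. -/
noncomputable def dir3 : Fin 3 → EuclideanSpace ℝ (Fin 2) × ℝ
  | 0 => (EuclideanSpace.single 0 1, 0)
  | 1 => (EuclideanSpace.single 1 1, 0)
  | 2 => (0, 1)

/-! The phase `φ x = ∫₀ᴸ ⟪θ, A (x' + sθ, x₃)⟫ ds` is `C¹`: differentiating under the integral
sign is justified because `fderiv A` is continuous, hence bounded on compact sets, and gives
`∂ⱼφ x = ∫₀ᴸ ⟪θ, ∂ⱼA (x' + sθ, x₃)⟫ ds`. Hence `∂ⱼ exp (-iφ) = -i ∂ⱼφ exp (-iφ)`, and integrating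
by parts against the compactly supported `ψ²` yields the identity. -/

section ParametricIntegral

variable {H E : Type*} [NormedAddCommGroup H] [NormedSpace ℝ H]
  [NormedAddCommGroup E] [NormedSpace ℝ E]

theorem hasFDerivAt_intervalIntegral_of_continuous_fderiv [ProperSpace H]
    {F : H → ℝ → E} {F' : H → ℝ → H →L[ℝ] E}
    (hF : Continuous (Function.uncurry F)) (hF' : Continuous (Function.uncurry F'))
    (hderiv : ∀ x t, HasFDerivAt (F · t) (F' x t) x) (a b : ℝ) (x₀ : H) :
    HasFDerivAt (fun x => ∫ t in a..b, F x t) (∫ t in a..b, F' x₀ t) x₀ := by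
  obtain ⟨C, hC⟩ := ((isCompact_closedBall x₀ 1).prod (isCompact_uIcc (a := a) (b := b))
    ).exists_bound_of_continuousOn hF'.continuousOn
  have hcont : ∀ x, Continuous (F x) := fun x => hF.comp (Continuous.prodMk_right x)
  refine intervalIntegral.hasFDerivAt_integral_of_dominated_of_fderiv_le (bound := fun _ => C)
    (Metric.closedBall_mem_nhds x₀ one_pos)
    (Filter.Eventually.of_forall fun x => (hcont x).aestronglyMeasurable)
    ((hcont x₀).intervalIntegrable _ _)
    (hF'.comp (Continuous.prodMk_right x₀)).aestronglyMeasurable ?_ intervalIntegrable_const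
    (Filter.Eventually.of_forall fun t _ x _ => hderiv x t)
  exact Filter.Eventually.of_forall fun t ht x hx => hC (x, t) ⟨hx, Set.uIoc_subset_uIcc ht⟩

theorem hasFDerivAt_intervalIntegral_comp_add_smul [ProperSpace H] {G : H → E}
    (hG : ContDiff ℝ 1 G) (v : H) (a b : ℝ) (p : H) :
    HasFDerivAt (fun q => ∫ s in a..b, G (q + s • v)) (∫ s in a..b, fderiv ℝ G (p + s • v)) p := by
  have hshift : Continuous fun q : H × ℝ => q.1 + q.2 • v := by fun_prop
  refine hasFDerivAt_intervalIntegral_of_continuous_fderiv (F := fun q s => G (q + s • v))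
    (F' := fun q s => fderiv ℝ G (q + s • v)) (hG.continuous.comp hshift)
    ((hG.continuous_fderiv one_ne_zero).comp hshift) (fun x t => ?_) a b p
  simpa [Function.comp_def] using (hG.differentiable one_ne_zero _).hasFDerivAt.comp x
    ((hasFDerivAt_id x).add_const (t • v))

theorem continuous_intervalIntegral_fderiv_comp_add_smul {G : H → E} (hG : ContDiff ℝ 1 G)
    (v : H) (a b : ℝ) :
    Continuous fun p => ∫ s in a..b, fderiv ℝ G (p + s • v) :=
  intervalIntegral.continuous_parametric_intervalIntegral_of_continuous'
    (f := fun p s => fderiv ℝ G (p + s • v))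
    ((hG.continuous_fderiv one_ne_zero).comp (by fun_prop)) a b

end ParametricIntegral

section IntegrationByParts

open Complex

variable {E : Type*} [NormedAddCommGroup E] [NormedSpace ℝ E] [FiniteDimensional ℝ E]
  [MeasurableSpace E] [BorelSpace E]

theorem integral_fderiv_mul_cexp_neg_I_mul (μ : Measure E) [μ.IsAddHaarMeasure]
    {f : E → ℂ} (hf : ContDiff ℝ 1 f) (hfc : HasCompactSupport f)
    {φ : E → ℝ} {φ' : E → E →L[ℝ] ℝ} (hφ : ∀ x, HasFDerivAt φ (φ' x) x) (hφ' : Continuous φ')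
    (v : E) :
    ∫ x, fderiv ℝ f x v * cexp (-I * φ x) ∂μ
      = I * ∫ x, f x * (φ' x v) * cexp (-I * φ x) ∂μ := by
  set g : E → ℂ := fun x => cexp (-I * φ x)
  have hg : ∀ x, HasFDerivAt g (g x • (-I) • ofRealCLM.comp (φ' x)) x := fun x =>
    ((ofRealCLM.hasFDerivAt.comp x (hφ x)).const_mul (-I)).cexp
  have hφc : Continuous φ := continuous_iff_continuousAt.2 fun x => (hφ x).continuousAt
  have hgc : Continuous g := by fun_prop
  have hfderiv_g : (fun x => f x * fderiv ℝ g x v) = fun x => -I * (f x * φ' x v * g x) :=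
    funext fun x => by
      simp only [(hg x).fderiv, smul_apply, ContinuousLinearMap.comp_apply,
        ofRealCLM_apply, smul_eq_mul]
      ring
  have hf' : Continuous fun x => fderiv ℝ f x v :=
    (hf.continuous_fderiv one_ne_zero).clm_apply continuous_const
  have hf'c : HasCompactSupport fun x => fderiv ℝ f x v :=
    (hfc.fderiv ℝ).comp_left (g := fun M : E →L[ℝ] ℂ => M v) rfl
  have hint₁ : Integrable (fun x => fderiv ℝ f x v * g x) μ :=
    (hf'.mul hgc).integrable_of_hasCompactSupport hf'c.mul_right
  have hint₂ : Integrable (fun x => f x * φ' x v * g x) μ :=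
    ((hf.continuous.mul (by fun_prop)).mul hgc).integrable_of_hasCompactSupport
      hfc.mul_right.mul_right
  have hint₃ : Integrable (fun x => f x * g x) μ :=
    (hf.continuous.mul hgc).integrable_of_hasCompactSupport hfc.mul_right
  have key := integral_mul_fderiv_eq_neg_fderiv_mul_of_integrable (μ := μ) (v := v) hint₁
    (hfderiv_g ▸ hint₂.const_mul (-I)) hint₃
    (fun x _ => hf.differentiable one_ne_zero x) (fun x _ => (hg x).differentiableAt)
  rw [hfderiv_g, integral_const_mul, neg_mul, neg_inj] at key
  exact key.symm

end IntegrationByParts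

theorem stmt17_general
    (A : EuclideanSpace ℝ (Fin 2) × ℝ → EuclideanSpace ℝ (Fin 2))
    (hA : ContDiff ℝ 1 A)
    (θ : EuclideanSpace ℝ (Fin 2))
    (L : ℝ) (j : Fin 3)
    (ψ : EuclideanSpace ℝ (Fin 2) × ℝ → ℂ)
    (hψ : ContDiff ℝ 1 ψ) (hψsupp : HasCompactSupport ψ) :
    ∫ p : EuclideanSpace ℝ (Fin 2) × ℝ,
        (fderiv ℝ (fun y => ψ y ^ 2) p (dir3 j))
          * Complex.exp (-Complex.I *
              ((∫ s in (0:ℝ)..L, ⟪θ, A (p.1 + s • θ, p.2)⟫ : ℝ) : ℂ))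
      = Complex.I * ∫ p : EuclideanSpace ℝ (Fin 2) × ℝ,
          ψ p ^ 2
            * ((∫ s in (0:ℝ)..L, ⟪θ, (fderiv ℝ A (p.1 + s • θ, p.2)) (dir3 j)⟫ : ℝ) : ℂ)
            * Complex.exp (-Complex.I *
                ((∫ s in (0:ℝ)..L, ⟪θ, A (p.1 + s • θ, p.2)⟫ : ℝ) : ℂ)) := by
  set w : EuclideanSpace ℝ (Fin 2) × ℝ := (θ, 0)
  have hshift : ∀ p (s : ℝ), ((p.1 + s • θ, p.2) : EuclideanSpace ℝ (Fin 2) × ℝ) = p + s • w :=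
    fun p s => by simp [w, Prod.ext_iff]
  have hG : ContDiff ℝ 1 fun q => ⟪θ, A q⟫ := contDiff_const.inner ℝ hA
  have hGderiv : ∀ q u, fderiv ℝ (fun q => ⟪θ, A q⟫) q u = ⟪θ, fderiv ℝ A q u⟫ := fun q u => by
    simp [fderiv_inner_apply ℝ (differentiableAt_const θ) (hA.differentiable one_ne_zero q)]
  -- instance search does not unfold `volume` on a product to `volume.prod volume`
  have : (volume : Measure (EuclideanSpace ℝ (Fin 2) × ℝ)).IsAddHaarMeasure :=
    Measure.prod.instIsAddHaarMeasure _ _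
  have hparts := integral_fderiv_mul_cexp_neg_I_mul volume (hψ.pow 2)
    (hψsupp.comp_left (g := (· ^ 2)) (zero_pow two_ne_zero))
    (fun p => hasFDerivAt_intervalIntegral_comp_add_smul hG w 0 L p)
    (continuous_intervalIntegral_fderiv_comp_add_smul hG w 0 L) (dir3 j)
  simp only [hshift]
  rw [hparts]
  congr 3 with p
  rw [ContinuousLinearMap.intervalIntegral_apply (φ := fun s => fderiv ℝ _ (p + s • w))
    (((hG.continuous_fderiv one_ne_zero).comp (by fun_prop)).intervalIntegrable _ _)]
  simp only [hGderiv]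

theorem stmt17
    (A : EuclideanSpace ℝ (Fin 2) × ℝ → EuclideanSpace ℝ (Fin 2))
    (hA : ContDiff ℝ 1 A)
    (hAbd : ∃ C, ∀ x, ‖A x‖ ≤ C ∧ ‖fderiv ℝ A x‖ ≤ C)
    (θ : EuclideanSpace ℝ (Fin 2)) (hθ : ‖θ‖ = 1)
    (L : ℝ) (hL : 0 < L) (j : Fin 3)
    (ψ : EuclideanSpace ℝ (Fin 2) × ℝ → ℂ)
    (hψ : ContDiff ℝ 1 ψ) (hψsupp : HasCompactSupport ψ) :
    ∫ p : EuclideanSpace ℝ (Fin 2) × ℝ,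
        (fderiv ℝ (fun y => ψ y ^ 2) p (dir3 j))
          * Complex.exp (-Complex.I *
              ((∫ s in (0:ℝ)..L, ⟪θ, A (p.1 + s • θ, p.2)⟫ : ℝ) : ℂ))
      = Complex.I * ∫ p : EuclideanSpace ℝ (Fin 2) × ℝ,
          ψ p ^ 2
            * ((∫ s in (0:ℝ)..L, ⟪θ, (fderiv ℝ A (p.1 + s • θ, p.2)) (dir3 j)⟫ : ℝ) : ℂ)
            * Complex.exp (-Complex.I *
                ((∫ s in (0:ℝ)..L, ⟪θ, A (p.1 + s • θ, p.2)⟫ : ℝ) : ℂ)) :=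
  stmt17_general A hA θ L j ψ hψ hψsupp
end

section
/- Let R > 1, T > 0, let θ ∈ ℝ² be a unit vector, and let σ ≥ (R + 1)/T. Let q : ℝ³ → ℂ be bounded and measurable with q(y', y₃) = 0 whenever |y'| > R, and let φ : ℝ³ → ℂ be continuous with compact support such that φ(y', y₃) = 0 unless R < |y'| < R + 1 and y'·θ ≤ 0. Then ∫_0^T ∫_{ℝ³} q(y', y₃) φ(y' − 2σtθ, y₃)² dy' dy₃ dt = (2σ)^{−1} ∫_{ℝ³} ( ∫_ℝ q(y' + sθ, y₃) ds ) φ(y', y₃)² dy' dy₃. -/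
/-!
Translating `y'` by `2σtθ` turns the left side into `∫₀ᵀ F(2σt) dt` with
`F(s) = ∫ q(y' + sθ, y₃) φ(y)² dy`, and the substitution `s = 2σt` gives `(2σ)⁻¹ ∫₀^{2σT} F`.
On the support of `φ` the point `y'` lies in the annulus `R < |y'| < R + 1` with `y'·θ ≤ 0`, so
the line `y' + sθ` can meet the ball `|·| ≤ R`, where `q` lives, only for `0 < s ≤ 2R + 1 < 2σT`.
Hence the `s`-integral may be taken over all of `ℝ`, and Fubini exchanges the two integrals.
-/

open MeasureTheory Set
open scoped RealInnerProductSpace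

section Geometry

variable {E : Type*} [NormedAddCommGroup E] [InnerProductSpace ℝ E]

lemma norm_le_norm_add_smul_of_inner_nonpos {x θ : E} {s : ℝ} (hxθ : ⟪x, θ⟫ ≤ 0) (hs : s ≤ 0) :
    ‖x‖ ≤ ‖x + s • θ‖ := by
  have h : ‖x‖ ^ 2 ≤ ‖x + s • θ‖ ^ 2 := by
    rw [norm_add_sq_real, real_inner_smul_right]
    nlinarith [sq_nonneg ‖s • θ‖]
  exact le_of_sq_le_sq (by simpa [sq_abs] using h) (norm_nonneg _)

lemma mem_Ioc_of_norm_add_smul_le {x θ : E} {R s : ℝ} (hθ : ‖θ‖ = 1) (hxR : R < ‖x‖)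
    (hxR' : ‖x‖ < R + 1) (hxθ : ⟪x, θ⟫ ≤ 0) (hs : ‖x + s • θ‖ ≤ R) : s ∈ Ioc 0 (2 * R + 1) := by
  constructor
  · by_contra! hs0
    linarith [norm_le_norm_add_smul_of_inner_nonpos hxθ hs0]
  · have h : ‖s • θ‖ ≤ ‖x + s • θ‖ + ‖x‖ := by
      simpa using norm_sub_le (x + s • θ) x
    rw [norm_smul, hθ, mul_one, Real.norm_eq_abs] at h
    linarith [le_abs_self s]

end Geometry

theorem IsCompact.integrable_of_bound {α F : Type*} [TopologicalSpace α] [MeasurableSpace α]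
    {μ : Measure α} [IsFiniteMeasureOnCompacts μ] [NormedAddCommGroup F] {f : α → F}
    {K : Set α} {C : ℝ} (hK : IsCompact K) (hf : AEStronglyMeasurable f μ)
    (hC : ∀ x, ‖f x‖ ≤ C) (hfK : ∀ x ∉ K, f x = 0) : Integrable f μ :=
  (Measure.integrableOn_of_bounded hK.measure_lt_top.ne hf
    (ae_of_all _ hC)).integrable_of_forall_notMem_eq_zero hfK

theorem setIntegral_Ioc_comp_mul_left {F : Type*} [NormedAddCommGroup F] [NormedSpace ℝ F]
    (f : ℝ → F) {c : ℝ} (hc : 0 < c) {T : ℝ} :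
    ∫ t in Ioc 0 T, f (c * t) = c⁻¹ • ∫ s in Ioc 0 (c * T), f s := by
  rcases le_total 0 T with hT | hT
  · rw [← intervalIntegral.integral_of_le hT, ← intervalIntegral.integral_of_le (by positivity),
      intervalIntegral.integral_comp_mul_left f hc.ne', mul_zero]
  · rw [Ioc_eq_empty (by linarith), Ioc_eq_empty (by nlinarith)]
    simp

theorem integral_mul_comp_sub_fst {E Z A : Type*} [AddGroup E] [MeasurableSpace E]
    [MeasurableAdd E] [MeasurableSpace Z] [NormedRing A] [NormedSpace ℝ A]
    (μ : Measure E) [μ.IsAddRightInvariant] [SFinite μ] (ν : Measure Z) [SFinite ν]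
    (f g : E × Z → A) (v : E) :
    ∫ y, f y * g (y.1 - v, y.2) ∂μ.prod ν = ∫ y, f (y.1 + v, y.2) * g y ∂μ.prod ν := by
  have h := ((measurePreserving_add_right μ v).prod (MeasurePreserving.id ν)).integral_comp
    ((MeasurableEquiv.addRight v).prodCongr (MeasurableEquiv.refl Z)).measurableEmbedding
    (fun y => f y * g (y.1 - v, y.2))
  simpa [Prod.map] using h.symm

section XRay

variable {E Z : Type*} [NormedAddCommGroup E] [InnerProductSpace ℝ E]
  {q φ : E × Z → ℂ} {θ : E} {R : ℝ}

theorem xray_integrand_eq_zero_of_notMem_Ioc (hθ : ‖θ‖ = 1)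
    (hqsupp : ∀ y : E × Z, R < ‖y.1‖ → q y = 0)
    (hφ : ∀ y : E × Z, ¬(R < ‖y.1‖ ∧ ‖y.1‖ < R + 1 ∧ ⟪y.1, θ⟫ ≤ 0) → φ y = 0)
    {s : ℝ} (hs : s ∉ Ioc 0 (2 * R + 1)) (y : E × Z) :
    q (y.1 + s • θ, y.2) * φ y ^ 2 = 0 := by
  by_cases hy : R < ‖y.1‖ ∧ ‖y.1‖ < R + 1 ∧ ⟪y.1, θ⟫ ≤ 0
  · rw [hqsupp (y.1 + s • θ, y.2) ?_, zero_mul]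
    by_contra! h
    exact hs (mem_Ioc_of_norm_add_smul_le hθ hy.1 hy.2.1 hy.2.2 h)
  · rw [hφ y hy, zero_pow two_ne_zero, mul_zero]

theorem integrable_xray_integrand [MeasurableSpace E] [BorelSpace E] [SecondCountableTopology E]
    [TopologicalSpace Z] [MeasurableSpace Z] [OpensMeasurableSpace Z]
    (μ : Measure (E × Z)) [IsFiniteMeasureOnCompacts μ] (hθ : ‖θ‖ = 1)
    (hqmeas : Measurable q) (hqbd : ∃ C, ∀ y, ‖q y‖ ≤ C)
    (hqsupp : ∀ y : E × Z, R < ‖y.1‖ → q y = 0)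
    (hφcont : Continuous φ) (hφsupp : HasCompactSupport φ)
    (hφ : ∀ y : E × Z, ¬(R < ‖y.1‖ ∧ ‖y.1‖ < R + 1 ∧ ⟪y.1, θ⟫ ≤ 0) → φ y = 0) :
    Integrable (fun p : ℝ × (E × Z) => q (p.2.1 + p.1 • θ, p.2.2) * φ p.2 ^ 2)
      ((volume : Measure ℝ).prod μ) := by
  obtain ⟨C, hC⟩ := hqbd
  obtain ⟨M, hM⟩ := hφsupp.exists_bound_of_continuous hφcont
  have hK : IsCompact (Icc 0 (2 * R + 1) ×ˢ tsupport φ) := isCompact_Icc.prod hφsupp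
  refine hK.integrable_of_bound (C := C * M ^ 2) ?_ ?_ ?_
  · exact ((hqmeas.comp (by fun_prop)).mul
      ((hφcont.comp continuous_snd).pow 2).measurable).aestronglyMeasurable
  · intro p
    rw [norm_mul, norm_pow]
    exact mul_le_mul (hC _) (pow_le_pow_left₀ (norm_nonneg _) (hM _) 2) (by positivity)
      ((norm_nonneg _).trans (hC p.2))
  · rintro ⟨s, y⟩ hp
    rcases not_and_or.mp hp with hs | hy
    · exact xray_integrand_eq_zero_of_notMem_Ioc hθ hqsupp hφ
        (fun h => hs (Ioc_subset_Icc_self h)) y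
    · rw [image_eq_zero_of_notMem_tsupport hy, zero_pow two_ne_zero, mul_zero]

end XRay

theorem stmt18
    (R T σ : ℝ) (hR : 1 < R) (hT : 0 < T) (hσ : (R + 1) / T ≤ σ)
    (θ : EuclideanSpace ℝ (Fin 2)) (hθ : ‖θ‖ = 1)
    (q : EuclideanSpace ℝ (Fin 2) × ℝ → ℂ)
    (hqmeas : Measurable q) (hqbd : ∃ C, ∀ y, ‖q y‖ ≤ C)
    (hqsupp : ∀ y : EuclideanSpace ℝ (Fin 2) × ℝ, R < ‖y.1‖ → q y = 0)
    (φ : EuclideanSpace ℝ (Fin 2) × ℝ → ℂ)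
    (hφcont : Continuous φ) (hφsupp : HasCompactSupport φ)
    (hφ : ∀ y : EuclideanSpace ℝ (Fin 2) × ℝ,
      ¬(R < ‖y.1‖ ∧ ‖y.1‖ < R + 1 ∧ ⟪y.1, θ⟫ ≤ 0) → φ y = 0) :
    ∫ t in Set.Ioc (0:ℝ) T, ∫ y : EuclideanSpace ℝ (Fin 2) × ℝ,
        q y * φ (y.1 - (2 * σ * t) • θ, y.2) ^ 2
      = (((2 * σ : ℝ)) : ℂ)⁻¹ * ∫ y : EuclideanSpace ℝ (Fin 2) × ℝ,
          (∫ s : ℝ, q (y.1 + s • θ, y.2)) * φ y ^ 2 := by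
  have hσT : R + 1 ≤ σ * T := (div_le_iff₀ hT).mp hσ
  have h2σ : 0 < 2 * σ := by nlinarith
  have hvanish : ∀ s ∉ Ioc 0 (2 * σ * T), ∫ y, q (y.1 + s • θ, y.2) * φ y ^ 2 = 0 := by
    refine fun s hs => integral_eq_zero_of_ae (ae_of_all _ fun y => ?_)
    refine xray_integrand_eq_zero_of_notMem_Ioc hθ hqsupp hφ (fun h => hs ?_) y
    exact Ioc_subset_Ioc_right (by linarith) h
  have htranslate (c : ℝ) :
      ∫ y, q y * φ (y.1 - c • θ, y.2) ^ 2 = ∫ y, q (y.1 + c • θ, y.2) * φ y ^ 2 :=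
    integral_mul_comp_sub_fst volume volume q (φ · ^ 2) (c • θ)
  simp_rw [htranslate]
  rw [setIntegral_Ioc_comp_mul_left (fun s => ∫ y, q (y.1 + s • θ, y.2) * φ y ^ 2) h2σ,
    setIntegral_eq_integral_of_forall_compl_eq_zero hvanish,
    integral_integral_swap
      (integrable_xray_integrand volume hθ hqmeas hqbd hqsupp hφcont hφsupp hφ)]
  simp_rw [integral_mul_const]
  rw [Complex.real_smul, Complex.ofReal_inv]
end

section
/- Let R > 0, let A : ℝ³ → ℝ² be a C¹ map such that A and its derivative are bounded and A(x', x₃) = 0 whenever |x'| ≥ R, and let θ ∈ ℝ² be a unit vector. Define g(y', y₃) := ∫_ℝ θ·A(y' + sθ, y₃) ds. Then g is differentiable with respect to y' at every point and θ·∇_{y'} g(y', y₃) = 0 for every (y', y₃) ∈ ℝ² × ℝ. -/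
open MeasureTheory Metric Set
open scoped RealInnerProductSpace Convolution

/-!
Along a line in direction `v`, `x ↦ ∫ t, φ (x + t • v)` is invariant under `x ↦ x + τ • v` by
translation invariance of Lebesgue measure, so its derivative in direction `v` vanishes wherever it
exists. Differentiability comes from writing the line integral as a convolution on `ℝ` with a
parameter: for `x` in a fixed ball, `t ↦ φ (x - t • v)` is supported in one compact interval.
-/

section LineIntegral

variable {E : Type*} [NormedAddCommGroup E] [NormedSpace ℝ E]

theorem HasCompactSupport.exists_forall_mem_ball_add_smul_eq_zero {F : Type*} [Zero F] {φ : E → F}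
    (hφ : HasCompactSupport φ) {v : E} (hv : v ≠ 0) (y : E) (r : ℝ) :
    ∃ M, ∀ x ∈ ball y r, ∀ t : ℝ, M < |t| → φ (x + t • v) = 0 := by
  obtain ⟨ρ, hρ⟩ := hφ.isCompact.isBounded.subset_closedBall 0
  refine ⟨(ρ + ‖y‖ + r) / ‖v‖, fun x hx t ht => image_eq_zero_of_notMem_tsupport fun hmem => ?_⟩
  have h_in : ‖x + t • v‖ ≤ ρ := by simpa using hρ hmem
  have h_x : ‖x‖ < ‖y‖ + r := by
    have := norm_le_norm_add_norm_sub' x y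
    rw [mem_ball, dist_eq_norm] at hx
    linarith
  have h_line : |t| * ‖v‖ ≤ ‖x + t • v‖ + ‖x‖ := by
    rw [← Real.norm_eq_abs, ← norm_smul]
    simpa using norm_sub_le (x + t • v) x
  rw [div_lt_iff₀ (norm_pos_iff.2 hv)] at ht
  linarith

variable {F : Type*} [NormedAddCommGroup F] [NormedSpace ℝ F]

theorem ContDiff.integral_add_smul {φ : E → F} {n : ℕ∞} (hφ : ContDiff ℝ n φ)
    (hc : HasCompactSupport φ) {v : E} (hv : v ≠ 0) :
    ContDiff ℝ n fun x => ∫ t : ℝ, φ (x + t • v) := by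
  rw [contDiff_iff_contDiffAt]
  intro y
  obtain ⟨M, hM⟩ := hc.exists_forall_mem_ball_add_smul_eq_zero hv y 1
  have h_conv : ContDiffOn ℝ n (fun x => ((fun _ : ℝ => (1 : ℝ)) ⋆[ContinuousLinearMap.lsmul ℝ ℝ]
      fun t => φ (x - t • v)) (0 : ℝ)) (ball y 1) := by
    refine contDiffOn_convolution_right_with_param_comp _ contDiffOn_const isOpen_ball
      (isCompact_closedBall 0 M) (fun x t hx ht => ?_) (locallyIntegrable_const 1) ?_
    · have h_far : M < |-t| := by simpa using ht
      simpa [sub_eq_add_neg, ← neg_smul] using hM x hx (-t) h_far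
    · exact (hφ.comp (contDiff_fst.sub (contDiff_snd.smul contDiff_const))).contDiffOn
  convert h_conv.contDiffAt (ball_mem_nhds y one_pos) using 2 with x
  simp [convolution_def, sub_eq_add_neg]

theorem integral_add_smul_add_smul (φ : E → F) (x v : E) (τ : ℝ) :
    ∫ t : ℝ, φ (x + τ • v + t • v) = ∫ t : ℝ, φ (x + t • v) := by
  simpa only [add_assoc, ← add_smul, add_comm τ] using
    integral_add_right_eq_self (fun t : ℝ => φ (x + t • v)) τ

theorem lineDeriv_integral_add_smul_self (φ : E → F) (x v : E) :
    lineDeriv ℝ (fun y => ∫ t : ℝ, φ (y + t • v)) x v = 0 := by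
  simp only [lineDeriv, integral_add_smul_add_smul, deriv_const]

end LineIntegral

theorem stmt19_general
    (R : ℝ)
    (A : EuclideanSpace ℝ (Fin 2) × ℝ → EuclideanSpace ℝ (Fin 2))
    (hA : ContDiff ℝ 1 A)
    (hAsupp : ∀ x : EuclideanSpace ℝ (Fin 2) × ℝ, R ≤ ‖x.1‖ → A x = 0)
    (θ : EuclideanSpace ℝ (Fin 2)) (hθ : ‖θ‖ = 1)
    (g : EuclideanSpace ℝ (Fin 2) → ℝ → ℝ)
    (hg : ∀ (y' : EuclideanSpace ℝ (Fin 2)) (y₃ : ℝ),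
      g y' y₃ = ∫ s : ℝ, ⟪θ, A (y' + s • θ, y₃)⟫) :
    ∀ (y' : EuclideanSpace ℝ (Fin 2)) (y₃ : ℝ),
      DifferentiableAt ℝ (fun z => g z y₃) y' ∧
      fderiv ℝ (fun z => g z y₃) y' θ = 0 := by
  intro y' y₃
  set φ : EuclideanSpace ℝ (Fin 2) → ℝ := fun x => ⟪θ, A (x, y₃)⟫
  have hφ : ContDiff ℝ 1 φ := contDiff_const.inner ℝ (hA.comp (contDiff_id.prodMk contDiff_const))
  have hφ_supp : HasCompactSupport φ := HasCompactSupport.intro (isCompact_closedBall 0 R)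
    fun x hx => by simp [φ, hAsupp (x, y₃) (not_le.1 (mt mem_closedBall_zero_iff.2 hx)).le]
  have hθ0 : θ ≠ 0 := norm_ne_zero_iff.1 (by rw [hθ]; exact one_ne_zero)
  have hg_eq : (fun z => g z y₃) = fun z => ∫ s : ℝ, φ (z + s • θ) := funext fun z => hg z y₃
  have h_diff : DifferentiableAt ℝ (fun z => g z y₃) y' :=
    hg_eq ▸ (hφ.integral_add_smul hφ_supp hθ0).differentiable one_ne_zero y'
  refine ⟨h_diff, ?_⟩
  rw [← h_diff.lineDeriv_eq_fderiv, hg_eq]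
  exact lineDeriv_integral_add_smul_self φ y' θ

theorem stmt19
    (R : ℝ) (hR : 0 < R)
    (A : EuclideanSpace ℝ (Fin 2) × ℝ → EuclideanSpace ℝ (Fin 2))
    (hA : ContDiff ℝ 1 A)
    (hAbd : ∃ C, ∀ x, ‖A x‖ ≤ C ∧ ‖fderiv ℝ A x‖ ≤ C)
    (hAsupp : ∀ x : EuclideanSpace ℝ (Fin 2) × ℝ, R ≤ ‖x.1‖ → A x = 0)
    (θ : EuclideanSpace ℝ (Fin 2)) (hθ : ‖θ‖ = 1)
    (g : EuclideanSpace ℝ (Fin 2) → ℝ → ℝ)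
    (hg : ∀ (y' : EuclideanSpace ℝ (Fin 2)) (y₃ : ℝ),
      g y' y₃ = ∫ s : ℝ, ⟪θ, A (y' + s • θ, y₃)⟫) :
    ∀ (y' : EuclideanSpace ℝ (Fin 2)) (y₃ : ℝ),
      DifferentiableAt ℝ (fun z => g z y₃) y' ∧
      fderiv ℝ (fun z => g z y₃) y' θ = 0 :=
  stmt19_general R A hA hAsupp θ hθ g hg
end
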